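/- arXiv:2409.12627 — 15 statements merged into one kernel-verified Lean document; each statement's English description precedes it below -/
import Mathlib

section
/- Let G be a group, n ≥ 1, and t : (Fin n → G) → G a monoid homomorphism from the direct product group Fin n → G to G which is a Taylor operation. Then G is commutative: a * b = b * a for all a, b : G. -/
/-- An operation `t : (Fin n → A) → A` is a Taylor operation if it is idempotent and,
for every coordinate `i`, satisfies a Taylor identity in two variables differing at `i`. -/
def IsTaylorOp {A : Type*} {n : ℕ} (t : (Fin n → A) → A) : Prop :=
  (∀ x : A, t (fun _ => x) = x) ∧
    ∀ i : Fin n, ∃ α β : Fin n → Fin 2, α i ≠ β i ∧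
      ∀ x : Fin 2 → A, t (x ∘ α) = t (x ∘ β)

theorem taylor_group_abelian {G : Type*} [Group G] (n : ℕ) (hn : 1 ≤ n)
    (t : (Fin n → G) →* G) (htaylor : IsTaylorOp (t : (Fin n → G) → G)) :
    ∀ a b : G, a * b = b * a := by
  classical
  obtain ⟨hidem, htay⟩ := htaylor
  -- Lemma A: if f i = 1 then t f commutes with t (mulSingle i b)
  have lemA : ∀ (i : Fin n) (f : Fin n → G), f i = 1 →
      ∀ b : G, Commute (t f) (t (Pi.mulSingle i b)) := by
    intro i f hf b
    have h : Commute f (Pi.mulSingle i b) := by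
      show f * Pi.mulSingle i b = Pi.mulSingle i b * f
      funext j
      by_cases hj : j = i
      · subst hj; simp [hf]
      · simp [Pi.mulSingle_apply, hj]
    exact h.map t
  -- Lemma B: φ_i(a) commutes with φ_i(b)
  have lemB : ∀ (i : Fin n) (a b : G),
      Commute (t (Pi.mulSingle i a)) (t (Pi.mulSingle i b)) := by
    intro i a b
    obtain ⟨α, β, hαβ, hid⟩ := htay i
    set c := α i with hc
    set u : Fin n → G := fun j => if α j = c then a else 1 with hu
    set v : Fin n → G := fun j => if β j = c then a else 1 with hv
    set w : Fin n → G := fun j => if j = i then 1 else u j with hw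
    have h1 : t u = t v := by
      have := hid (fun k => if k = c then a else 1)
      simpa [Function.comp_def, hu, hv] using this
    have h2 : u = Pi.mulSingle i a * w := by
      funext j
      by_cases hj : j = i
      · subst hj; simp [hu, hw, hc]
      · simp [Pi.mulSingle_apply, hj, hw]
    have hvi : v i = 1 := by simp [hv, hαβ.symm]
    have hwi : w i = 1 := by simp [hw]
    have hv' := lemA i v hvi b
    have hw' := lemA i w hwi b
    have key : t (Pi.mulSingle i a) = t v * (t w)⁻¹ := by
      have : t u = t (Pi.mulSingle i a) * t w := by rw [h2, map_mul]
      rw [h1] at this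
      group
      rw [this]
      group
    rw [key]
    exact hv'.mul_left hw'.inv_left
  -- Lemma C: every a commutes with φ_i(b)
  have lemC : ∀ (i : Fin n) (a b : G), Commute a (t (Pi.mulSingle i b)) := by
    intro i a b
    set r : Fin n → G := fun j => if j = i then 1 else a with hr
    have hdecomp : (fun _ : Fin n => a) = Pi.mulSingle i a * r := by
      funext j
      by_cases hj : j = i
      · subst hj; simp [hr]
      · simp [Pi.mulSingle_apply, hj, hr]
    have : a = t (Pi.mulSingle i a) * t r := by
      conv_lhs => rw [← hidem a]
      rw [show (fun _ : Fin n => a) = Pi.mulSingle i a * r from hdecomp, map_mul]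
    rw [this]
    exact (lemB i a b).mul_left (lemA i r (by simp [hr]) b)
  -- Final: build const b step by step
  intro a b
  set f : ℕ → (Fin n → G) := fun k j => if (j : ℕ) < k then b else 1 with hf
  have hstep : ∀ k (hk : k < n), f (k + 1) = f k * Pi.mulSingle (⟨k, hk⟩ : Fin n) b := by
    intro k hk
    funext j
    rcases lt_trichotomy (j : ℕ) k with h | h | h
    · have hne : j ≠ (⟨k, hk⟩ : Fin n) := Fin.ne_of_val_ne (by simp only [Fin.val_mk]; omega)
      simp [hf, Pi.mulSingle_apply, hne, h, Nat.lt_succ_of_lt h]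
    · have hEq : j = (⟨k, hk⟩ : Fin n) := by
        apply Fin.ext; simpa using h
      simp [hf, hEq, Nat.lt_irrefl]
    · have hne : j ≠ (⟨k, hk⟩ : Fin n) := Fin.ne_of_val_ne (by simp only [Fin.val_mk]; omega)
      have h1 : ¬ (j : ℕ) < k := by omega
      have h2 : ¬ (j : ℕ) < k + 1 := by omega
      simp [hf, Pi.mulSingle_apply, hne, h1, h2]
  have hcomm : ∀ k, k ≤ n → Commute a (t (f k)) := by
    intro k
    induction k with
    | zero =>
        intro _
        have : f 0 = 1 := by funext j; simp [hf]
        rw [this, map_one]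
        exact Commute.one_right a
    | succ k ih =>
        intro hk
        have hk' : k < n := hk
        rw [hstep k hk', map_mul]
        exact (ih (le_of_lt hk')).mul_right (lemC ⟨k, hk'⟩ a b)
  have hfn : f n = fun _ => b := by
    funext j; simp [hf, j.isLt]
  have := hcomm n le_rfl
  rw [hfn, hidem b] at this
  exact this
end

section
/- Let G be a group, n ≥ 1, and t : (Fin n → G) → G a monoid homomorphism from the direct product group Fin n → G to G which is a Taylor operation. Then for every i : Fin n and all x, g : G, the element h = t (fun j => if j = i then x else 1) is central in the sense that h * g = g * h. -/
theorem taylor_group_central {G : Type*} [Group G] (n : ℕ) (hn : 1 ≤ n)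
    (t : (Fin n → G) →* G) (htaylor : IsTaylorOp (t : (Fin n → G) → G)) :
    ∀ (i : Fin n) (x g : G),
      t (fun j => if j = i then x else 1) * g = g * t (fun j => if j = i then x else 1) := by
  obtain ⟨hid, htay⟩ := htaylor
  intro i x g
  -- notation: e z = function supported at i with value z
  set e : G → (Fin n → G) := fun z => fun j => if j = i then z else 1 with he
  -- Lemma M: if f i = 1 then t f commutes with t (e w) for any w
  have M : ∀ (f : Fin n → G) (w : G), f i = 1 → Commute (t f) (t (e w)) := by
    intro f w hf
    have hfun : f * e w = e w * f := by
      funext j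
      by_cases hj : j = i
      · subst hj; simp [he, hf]
      · simp [he, hj]
    show t f * t (e w) = t (e w) * t f
    rw [← map_mul, ← map_mul, hfun]
  -- Hard step: t (e z) commutes with t (e w)
  have H : ∀ z w : G, Commute (t (e z)) (t (e w)) := by
    intro z w
    obtain ⟨α, β, hαβ, heq⟩ := htay i
    set X : Fin 2 → G := fun k => if k = α i then z else 1 with hX
    set y : Fin n → G := fun j => if j = i then 1 else X (α j) with hy
    have hsplit : X ∘ α = e z * y := by
      funext j
      by_cases hj : j = i
      · subst hj; simp [he, hy, hX]
      · simp [he, hy, hj]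
    have h1 : t (X ∘ α) = t (e z) * t y := by rw [hsplit, map_mul]
    have hXβi : (X ∘ β) i = 1 := by
      simp only [Function.comp_apply, hX]
      rw [if_neg (fun h => hαβ h.symm)]
    have hez : t (e z) = t (X ∘ β) * (t y)⁻¹ := by
      rw [← heq, h1, mul_inv_cancel_right]
    rw [hez]
    exact (M _ w hXβi).mul_left (M y w (by simp [hy])).inv_left
  -- Assemble: g = t (e g) * t f' with f' i = 1
  set f' : Fin n → G := fun j => if j = i then 1 else g with hf'
  have hg : g = t (e g) * t f' := by
    have : (fun _ : Fin n => g) = e g * f' := by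
      funext j
      by_cases hj : j = i <;> simp [he, hf', hj]
    rw [← map_mul, ← this, hid g]
  have hcomm : Commute (t (e x)) g := by
    rw [hg]
    exact (H x g).mul_right (M f' x (by simp [hf'])).symm
  exact hcomm
end

section
/- A finite poset P is ramified if and only if for every order automorphism σ : P ≃o P and every monotone map f : P → P that is connected to σ (viewed as a monotone map) in the poset of monotone maps P → P with the pointwise order, one has f = σ. In other words, P is ramified iff every connected component of the poset of monotone self-maps of P that contains an automorphism of P contains no other element. -/
/-- An element of a poset is irreducible if it has exactly one upper cover
or exactly one lower cover. -/
def IsIrreducibleElem {P : Type*} [PartialOrder P] (x : P) : Prop :=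
  (∃! y : P, x ⋖ y) ∨ (∃! y : P, y ⋖ x)

/-- A poset is ramified if it has no irreducible elements. -/
def IsRamified (P : Type*) [PartialOrder P] : Prop :=
  ∀ x : P, ¬ IsIrreducibleElem x

/-- Two elements of a poset are connected if they are related by the
reflexive–transitive closure of comparability. -/
def PosetConnected {Q : Type*} [Preorder Q] (a b : Q) : Prop :=
  Relation.ReflTransGen (fun u v : Q => u ≤ v ∨ v ≤ u) a b

section Aux

variable {P : Type*} [PartialOrder P] [Fintype P]

lemma exists_cov_le {a b : P} (h : a < b) : ∃ x, a ⋖ x ∧ x ≤ b := by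
  obtain ⟨x, ⟨hax, hxb⟩, hmin⟩ :=
    (IsWellFounded.wf (r := (· < · : P → P → Prop))).has_min
      {z | a < z ∧ z ≤ b} ⟨b, h, le_rfl⟩
  exact ⟨x, ⟨hax, fun c hac hcx => hmin c ⟨hac, hcx.le.trans hxb⟩ hcx⟩, hxb⟩

lemma exists_le_cov {a b : P} (h : a < b) : ∃ x, a ≤ x ∧ x ⋖ b := by
  obtain ⟨x, ⟨hxb, hax⟩, hmax⟩ :=
    (IsWellFounded.wf (r := (· > · : P → P → Prop))).has_min
      {z | z < b ∧ a ≤ z} ⟨a, h, le_rfl⟩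
  exact ⟨x, hax, hxb, fun c hxc hcb => hmax c ⟨hcb, hax.trans hxc.le⟩ hxc⟩

lemma ramified_ge_id (hr : IsRamified P) (f : P →o P) (hf : ∀ x, x ≤ f x) :
    ∀ x, f x = x := by
  by_contra hc
  push_neg at hc
  obtain ⟨x, ⟨hfx, hxmax⟩⟩ :=
    (IsWellFounded.wf (r := (· > · : P → P → Prop))).has_min {z | f z ≠ z} hc
  have hlt : x < f x := lt_of_le_of_ne (hf x) (Ne.symm hfx)
  obtain ⟨y, hxy, hyfx⟩ := exists_cov_le hlt
  have hfix : ∀ z, x < z → f z = z := fun z hz => by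
    by_contra h; exact hxmax z h hz
  have hfxy : f x = y := by
    have h1 : f x ≤ f y := f.monotone hxy.le
    rw [hfix y hxy.lt] at h1
    exact le_antisymm h1 hyfx
  -- x has a unique upper cover, contradicting ramifiedness
  refine hr x (Or.inl ⟨y, hxy, fun y' hxy' => ?_⟩)
  have h2 : f x ≤ f y' := f.monotone hxy'.le
  rw [hfix y' hxy'.lt, hfxy] at h2
  rcases h2.lt_or_eq with h3 | h3
  · exact (hxy'.2 hxy.lt h3).elim
  · exact h3.symm

lemma ramified_le_id (hr : IsRamified P) (f : P →o P) (hf : ∀ x, f x ≤ x) :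
    ∀ x, f x = x := by
  by_contra hc
  push_neg at hc
  obtain ⟨x, ⟨hfx, hxmin⟩⟩ :=
    (IsWellFounded.wf (r := (· < · : P → P → Prop))).has_min {z | f z ≠ z} hc
  have hlt : f x < x := lt_of_le_of_ne (hf x) hfx
  obtain ⟨y, hfxy, hyx⟩ := exists_le_cov hlt
  have hfix : ∀ z, z < x → f z = z := fun z hz => by
    by_contra h; exact hxmin z h hz
  have hfxy' : f x = y := by
    have h1 : f y ≤ f x := f.monotone hyx.le
    rw [hfix y hyx.lt] at h1
    exact le_antisymm hfxy h1
  refine hr x (Or.inr ⟨y, hyx, fun y' hy'x => ?_⟩)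
  have h2 : f y' ≤ f x := f.monotone hy'x.le
  rw [hfix y' hy'x.lt, hfxy'] at h2
  rcases h2.lt_or_eq with h3 | h3
  · exact (hy'x.2 h3 hyx.lt).elim
  · exact h3

lemma comparable_auto (hr : IsRamified P) (σ : P ≃o P) (f : P →o P)
    (h : f ≤ ⟨σ, σ.monotone⟩ ∨ (⟨σ, σ.monotone⟩ : P →o P) ≤ f) :
    f = ⟨σ, σ.monotone⟩ := by
  have hkey : ∀ x, f x = σ x := by
    -- consider g = f ∘ σ.symm
    set g : P →o P := f.comp ⟨σ.symm, σ.symm.monotone⟩ with hg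
    have hgz : ∀ z, g z = f (σ.symm z) := fun z => rfl
    rcases h with h | h
    · have hgle : ∀ z, g z ≤ z := fun z => by
        have := h (σ.symm z)
        simpa [hgz] using this
      have := ramified_le_id hr g hgle
      intro x
      have h2 := this (σ x)
      simpa [hgz] using h2
    · have hgge : ∀ z, z ≤ g z := fun z => by
        have := h (σ.symm z)
        simpa [hgz] using this
      have := ramified_ge_id hr g hgge
      intro x
      have h2 := this (σ x)
      simpa [hgz] using h2
  ext x
  exact hkey x

end Aux

theorem ramified_iff_autos_alone (P : Type*) [PartialOrder P] [Fintype P] :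
    IsRamified P ↔
      ∀ (σ : P ≃o P) (f : P →o P),
        PosetConnected f ⟨σ, σ.monotone⟩ → f = ⟨σ, σ.monotone⟩ := by
  classical
  constructor
  · intro hr σ f hconn
    unfold PosetConnected at hconn
    induction hconn using Relation.ReflTransGen.head_induction_on with
    | refl => rfl
    | head hstep _ ih =>
      subst ih
      exact comparable_auto hr σ _ hstep
  · intro H
    intro x hx
    rcases hx with ⟨y, hxy, huniq⟩ | ⟨y, hyx, huniq⟩
    · -- unique upper cover: bump x up to y
      have hmono : Monotone (fun z => if z = x then y else z) := by
        intro a b hab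
        dsimp only
        split_ifs with ha hb hb
        · exact le_rfl
        · have hxb : x < b := lt_of_le_of_ne (ha ▸ hab) (Ne.symm hb)
          obtain ⟨c, hxc, hcb⟩ := exists_cov_le hxb
          exact (huniq c hxc ▸ hcb)
        · exact (hb ▸ hab).trans hxy.le
        · exact hab
      have hge : (⟨(OrderIso.refl P), (OrderIso.refl P).monotone⟩ : P →o P) ≤
          (⟨fun z => if z = x then y else z, hmono⟩ : P →o P) := by
        intro z
        simp only [OrderHom.coe_mk, OrderIso.coe_refl, id_eq]
        split_ifs with h
        · subst h; exact hxy.le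
        · exact le_rfl
      have := H (OrderIso.refl P) ⟨fun z => if z = x then y else z, hmono⟩
        (Relation.ReflTransGen.single (Or.inr hge))
      have hfx := congrArg (fun g => OrderHom.toFun g x) this
      simp only [OrderHom.coe_mk, if_pos rfl] at hfx
      exact hxy.ne' (by simpa using hfx)
    · -- unique lower cover: pull x down to y
      have hmono : Monotone (fun z => if z = x then y else z) := by
        intro a b hab
        dsimp only
        split_ifs with ha hb hb
        · exact le_rfl
        · exact hyx.le.trans (ha ▸ hab)
        · have hax : a < x := lt_of_le_of_ne (hb ▸ hab) ha
          obtain ⟨c, hac, hcx⟩ := exists_le_cov hax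
          exact hac.trans (huniq c hcx ▸ le_rfl)
        · exact hab
      have hle : (⟨fun z => if z = x then y else z, hmono⟩ : P →o P) ≤
          (⟨(OrderIso.refl P), (OrderIso.refl P).monotone⟩ : P →o P) := by
        intro z
        simp only [OrderHom.coe_mk, OrderIso.coe_refl, id_eq]
        split_ifs with h
        · subst h; exact hyx.le
        · exact le_rfl
      have := H (OrderIso.refl P) ⟨fun z => if z = x then y else z, hmono⟩
        (Relation.ReflTransGen.single (Or.inl hle))
      have hfx := congrArg (fun g => OrderHom.toFun g x) this
      simp only [OrderHom.coe_mk, if_pos rfl] at hfx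
      exact hyx.ne (by simpa using hfx)
end

section
/- Let P be a finite ramified poset and f : P → P a monotone map with x ≤ f x for all x ∈ P. Then f is the identity map. -/
theorem ramified_increasing_eq_id {P : Type*} [PartialOrder P] [Fintype P]
    (hram : IsRamified P) (f : P → P) (hmono : Monotone f) (hle : ∀ x, x ≤ f x) :
    f = id := by
  have key : ∀ x : P, f x = x := by
    intro x
    induction x using (wellFounded_gt (α := P)).induction with
    | _ x ih =>
    by_contra hne
    have hlt : x < f x := lt_of_le_of_ne (hle x) (Ne.symm hne)
    obtain ⟨z, hz, hzle⟩ := exists_covBy_le_of_lt hlt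
    -- every upper cover of x equals f x... first show f x ≤ w for covers w
    have hcov : ∀ w : P, x ⋖ w → w = f x := by
      intro w hw
      have hfw : f w = w := ih w hw.lt
      have : f x ≤ w := hfw ▸ hmono hw.le
      by_contra hne'
      exact hw.2 hlt (this.lt_of_ne fun h => hne' h.symm)
    exact hram x (Or.inl ⟨z, hz, fun w hw => (hcov w hw).trans (hcov z hz).symm⟩)
  funext x; exact key x
end

section
/- Let P and Q be finite posets and f, g : P → Q monotone maps with f x ≤ g x for all x ∈ P. Then f and g, viewed as continuous maps WithUpperSet P → WithUpperSet Q, are homotopic. -/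
open Topology

theorem le_monotone_maps_homotopic {P Q : Type*} [PartialOrder P] [PartialOrder Q]
    [Fintype P] [Fintype Q] (f g : P →o Q) (hfg : f ≤ g) :
    (Topology.WithUpperSet.map f).Homotopic (Topology.WithUpperSet.map g) := by
  have h10 : (1 : unitInterval) ≠ 0 := fun h => by
    simpa using congrArg Subtype.val h
  refine ⟨{ toFun := fun p => if p.1 = 0 then f p.2 else g p.2, continuous_toFun := ?_,
            map_zero_left := fun x => by exact if_pos rfl,
            map_one_left := fun x => by exact if_neg h10 }⟩
  rw [continuous_def]
  intro U hU
  rw [Topology.IsUpperSet.isOpen_iff_isUpperSet] at hU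
  set fU : Set (Topology.WithUpperSet P) := f ⁻¹' U with hfU
  set gU : Set (Topology.WithUpperSet P) := g ⁻¹' U with hgU
  have hsub : fU ⊆ gU := fun x hx => hU (hfg x) hx
  have heq : (fun p : unitInterval × Topology.WithUpperSet P =>
      if p.1 = 0 then f p.2 else g p.2) ⁻¹' U =
      (Set.univ ×ˢ fU) ∪ (({0}ᶜ : Set unitInterval) ×ˢ gU) := by
    ext ⟨t, x⟩
    change (if t = 0 then f x else g x) ∈ U ↔ _
    by_cases ht : t = 0 <;> simp [ht, hfU, hgU]
    · exact Iff.rfl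
    · exact ⟨Or.inr, fun h => h.elim (fun h => hsub h) id⟩
  suffices hU' : IsOpen ((Set.univ ×ˢ fU) ∪ (({0}ᶜ : Set unitInterval) ×ˢ gU)) by
    convert hU' using 1
    exact heq
  have hf : IsOpen fU := by
    rw [Topology.IsUpperSet.isOpen_iff_isUpperSet]
    exact hU.preimage f.monotone
  have hg : IsOpen gU := by
    rw [Topology.IsUpperSet.isOpen_iff_isUpperSet]
    exact hU.preimage g.monotone
  exact (isOpen_univ.prod hf).union (isOpen_compl_singleton.prod hg)
end

section
/- Let P be a finite poset, ℓ ∈ P an irreducible element, and Q the subposet {p ∈ P | p ≠ ℓ} with the induced order. Then WithUpperSet P and WithUpperSet Q are homotopy equivalent topological spaces. -/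
open Topology

open Topology.WithUpperSet in
/-- Two pointwise-comparable monotone maps induce homotopic maps on upper-set spaces. -/
lemma withUpperSet_homotopic_of_le {α β : Type*} [Preorder α] [Preorder β]
    (f g : α →o β) (h : ∀ x, f x ≤ g x) :
    (Topology.WithUpperSet.map f).Homotopic (Topology.WithUpperSet.map g) := by
  refine ⟨⟨⟨fun p => if p.1 = 0 then map f p.2 else map g p.2, ?_⟩, ?_, ?_⟩⟩
  · rw [continuous_def]
    intro s hs
    have hus : IsUpperSet s := (Topology.IsUpperSet.isOpen_iff_isUpperSet).1 hs
    have hsub : (map f ⁻¹' s) ⊆ (map g ⁻¹' s) := by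
      intro x hx
      exact hus (h (ofUpperSet x)) hx
    have : (fun p : unitInterval × Topology.WithUpperSet α =>
        if p.1 = 0 then map f p.2 else map g p.2) ⁻¹' s =
        (({0}ᶜ : Set unitInterval) ×ˢ (map g ⁻¹' s)) ∪
          ((Set.univ : Set unitInterval) ×ˢ (map f ⁻¹' s)) := by
      ext ⟨t, x⟩
      by_cases ht : t = 0
      · simp [ht]
      · simp only [Set.mem_preimage, if_neg ht, Set.mem_union, Set.mem_prod, Set.mem_compl_iff,
          Set.mem_singleton_iff, Set.mem_univ, true_and, ht, not_false_iff]
        exact ⟨fun hg => Or.inl hg, fun h => h.elim id (fun hf => hsub hf)⟩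
    rw [this]
    exact ((isOpen_compl_singleton).prod ((map g).continuous.isOpen_preimage s hs)).union
      (isOpen_univ.prod ((map f).continuous.isOpen_preimage s hs))
  · intro x; simp
  · intro x
    simp only [ContinuousMap.coe_mk]
    rw [if_neg (by norm_num : (1 : unitInterval) ≠ 0)]

theorem remove_irreducible_homotopy_equiv {P : Type*} [PartialOrder P] [Fintype P]
    (ℓ : P) (hirr : IsIrreducibleElem ℓ) :
    Nonempty
      (ContinuousMap.HomotopyEquiv (Topology.WithUpperSet P)
        (Topology.WithUpperSet {p : P // p ≠ ℓ})) := by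
  classical
  have : Finite P := Finite.of_fintype P
  set Q := {p : P // p ≠ ℓ}
  let inc : Q →o P := ⟨Subtype.val, fun _ _ h => h⟩
  rcases hirr with ⟨y, hy, huniq⟩ | ⟨y, hy, huniq⟩
  · -- unique upper cover
    have hyne : y ≠ ℓ := hy.lt.ne'
    let r : P →o Q := ⟨fun x => if h : x = ℓ then ⟨y, hyne⟩ else ⟨x, h⟩, by
      intro a b hab
      dsimp only
      split_ifs with ha hb hb
      · exact le_refl _
      · -- a = ℓ, b ≠ ℓ : need y ≤ b
        subst ha
        have hlt : a < b := lt_of_le_of_ne hab (Ne.symm hb)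
        obtain ⟨z, hz, hzb⟩ := exists_covBy_le_of_lt hlt
        have := huniq z hz
        subst this
        exact hzb
      · -- a ≠ ℓ, b = ℓ : a ≤ ℓ ≤ y
        subst hb
        exact hab.trans hy.le
      · exact hab⟩
    have hri : r.comp inc = OrderHom.id := by
      apply OrderHom.ext
      funext x
      apply Subtype.ext
      show (if h : x.1 = ℓ then (⟨y, hyne⟩ : Q) else ⟨x.1, h⟩).1 = x.1
      simp [r, inc, dif_neg x.2]
    have hle : ∀ x : P, (OrderHom.id : P →o P) x ≤ (inc.comp r) x := by
      intro x
      by_cases hx : x = ℓ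
      · subst hx
        show _ ≤ (if h : x = x then (⟨y, hyne⟩ : Q) else ⟨x, h⟩).1
        simp only [OrderHom.comp_coe, Function.comp_apply, OrderHom.coe_mk, r, inc, dif_pos rfl]
        exact hy.le
      · show x ≤ (if h : x = ℓ then (⟨y, hyne⟩ : Q) else ⟨x, h⟩).1
        simp only [OrderHom.comp_coe, Function.comp_apply, OrderHom.coe_mk, r, inc, dif_neg hx,
          OrderHom.id_coe, id_eq]
        exact le_refl x
    refine ⟨⟨Topology.WithUpperSet.map r, Topology.WithUpperSet.map inc, ?_, ?_⟩⟩
    · rw [← Topology.WithUpperSet.map_comp, ← Topology.WithUpperSet.map_id]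
      exact (withUpperSet_homotopic_of_le OrderHom.id (inc.comp r) hle).symm
    · rw [← Topology.WithUpperSet.map_comp, hri, Topology.WithUpperSet.map_id]
  · -- unique lower cover
    have hyne : y ≠ ℓ := hy.lt.ne
    let r : P →o Q := ⟨fun x => if h : x = ℓ then ⟨y, hyne⟩ else ⟨x, h⟩, by
      intro a b hab
      dsimp only
      split_ifs with ha hb hb
      · exact le_refl _
      · -- a = ℓ, b ≠ ℓ : y ≤ ℓ ≤ b
        subst ha
        exact hy.le.trans hab
      · -- a ≠ ℓ, b = ℓ : need a ≤ y
        subst hb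
        have hlt : a < b := lt_of_le_of_ne hab ha
        obtain ⟨z, haz, hz⟩ := exists_le_covBy_of_lt hlt
        have := huniq z hz
        subst this
        exact haz
      · exact hab⟩
    have hri : r.comp inc = OrderHom.id := by
      apply OrderHom.ext
      funext x
      apply Subtype.ext
      show (if h : x.1 = ℓ then (⟨y, hyne⟩ : Q) else ⟨x.1, h⟩).1 = x.1
      simp [r, inc, dif_neg x.2]
    have hle : ∀ x : P, (inc.comp r) x ≤ (OrderHom.id : P →o P) x := by
      intro x
      by_cases hx : x = ℓ
      · subst hx
        show (if h : x = x then (⟨y, hyne⟩ : Q) else ⟨x, h⟩).1 ≤ _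
        simp only [OrderHom.comp_coe, Function.comp_apply, OrderHom.coe_mk, r, inc, dif_pos rfl]
        exact hy.le
      · show (if h : x = ℓ then (⟨y, hyne⟩ : Q) else ⟨x, h⟩).1 ≤ x
        simp only [OrderHom.comp_coe, Function.comp_apply, OrderHom.coe_mk, r, inc, dif_neg hx,
          OrderHom.id_coe, id_eq]
        exact le_refl x
    refine ⟨⟨Topology.WithUpperSet.map r, Topology.WithUpperSet.map inc, ?_, ?_⟩⟩
    · rw [← Topology.WithUpperSet.map_comp, ← Topology.WithUpperSet.map_id]
      exact withUpperSet_homotopic_of_le (inc.comp r) OrderHom.id hle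
    · rw [← Topology.WithUpperSet.map_comp, hri, Topology.WithUpperSet.map_id]
end

section
/- Let (V, E) be a finite graph. There exists a nonempty finite chain C in the poset mhom(K₂, (V,E)) that is invariant under the flip, i.e., ν '' C = C, if and only if (V, E) has a self-loop, i.e., there exists v : V with E v v. -/
/-- The complete graph on `Bool` (the single edge `K₂`): edges are pairs of distinct vertices. -/
def K2 : Bool → Bool → Prop := fun a b => a ≠ b

/-- A multihomomorphism from the graph `(W, F)` to the graph `(V, E)`. -/
def IsMultihom {W V : Type*} (F : W → W → Prop) (E : V → V → Prop) (m : W → Set V) : Prop :=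
  (∀ u, (m u).Nonempty) ∧ ∀ u v a b, F u v → a ∈ m u → b ∈ m v → E a b

/-- The poset of multihomomorphisms from `(W, F)` to `(V, E)`, ordered pointwise by inclusion. -/
def Mhom {W V : Type*} (F : W → W → Prop) (E : V → V → Prop) : Type _ :=
  {m : W → Set V // IsMultihom F E m}

instance {W V : Type*} (F : W → W → Prop) (E : V → V → Prop) : PartialOrder (Mhom F E) :=
  Subtype.partialOrder _

/-- The flip action on `mhom(K₂, (V,E))` induced by the nontrivial automorphism of `K₂`. -/
def mhomFlip {V : Type*} {E : V → V → Prop} (m : Mhom K2 E) : Mhom K2 E :=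
  ⟨fun i => m.1 (!i),
    ⟨fun u => m.2.1 (!u),
      fun u v a b huv ha hb =>
        m.2.2 (!u) (!v) a b (by cases u <;> cases v <;> simp_all [K2]) ha hb⟩⟩

theorem flip_invariant_chain_iff_self_loop {V : Type*} [Fintype V] (E : V → V → Prop)
    (hsymm : ∀ u v, E u v → E v u) :
    (∃ C : Set (Mhom K2 E), C.Nonempty ∧ C.Finite ∧ IsChain (· ≤ ·) C ∧ mhomFlip '' C = C)
      ↔ ∃ v : V, E v v := by
  constructor
  · rintro ⟨C, ⟨m, hm⟩, -, hchain, hinv⟩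
    have hνm : mhomFlip m ∈ C := hinv ▸ Set.mem_image_of_mem _ hm
    have key : ∀ a : V, a ∈ m.1 true → a ∈ m.1 false → ∃ v : V, E v v := by
      intro a h1 h2
      exact ⟨a, m.2.2 true false a a (by simp [K2]) h1 h2⟩
    by_cases heq : m = mhomFlip m
    · obtain ⟨a, ha⟩ := m.2.1 true
      have h2 : m.1 true = m.1 false := congrFun (congrArg Subtype.val heq) true
      exact key a ha (h2 ▸ ha)
    · rcases hchain hm hνm heq with h | h
      · obtain ⟨a, ha⟩ := m.2.1 true
        exact key a ha (h true ha)
      · obtain ⟨a, ha⟩ := m.2.1 false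
        exact key a (h true ha) ha
  · rintro ⟨v, hv⟩
    have hmm : IsMultihom K2 E (fun _ => ({v} : Set V)) :=
      ⟨fun _ => ⟨v, rfl⟩, fun u w a b _ ha hb => by
        simp only [Set.mem_singleton_iff] at ha hb; subst ha; subst hb; exact hv⟩
    refine ⟨{⟨_, hmm⟩}, ⟨_, rfl⟩, Set.finite_singleton _,
      Set.subsingleton_singleton.isChain, ?_⟩
    have hfix : mhomFlip ⟨_, hmm⟩ = (⟨_, hmm⟩ : Mhom K2 E) := Subtype.ext rfl
    exact (Set.image_singleton (f := mhomFlip) (a := (⟨_, hmm⟩ : Mhom K2 E))).trans (congrArg _ hfix)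
end

section
/- Let (V, E) be a finite non-bipartite graph. Then there exist u, v : V with E u v such that the two multihomomorphisms m, m' ∈ mhom(K₂, (V,E)) defined by m false = {u}, m true = {v} and m' false = {v}, m' true = {u} lie in the same connected component of the poset mhom(K₂, (V,E)). -/
/-- A graph is bipartite if its vertices can be 2-coloured with no monochromatic edge. -/
def IsBipartite {V : Type*} (E : V → V → Prop) : Prop :=
  ∃ c : V → Bool, ∀ u v, E u v → c u ≠ c v

section Walks
variable {V : Type*}

/-- Walks of length `n` from `u` to `v`. -/
def Wk (E : V → V → Prop) : ℕ → V → V → Prop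
  | 0, u, v => u = v
  | n+1, u, v => ∃ w, E u w ∧ Wk E n w v

variable {E : V → V → Prop}

lemma wk_zero {u v : V} : Wk E 0 u v ↔ u = v := Iff.rfl
lemma wk_succ {n : ℕ} {u v : V} : Wk E (n+1) u v ↔ ∃ w, E u w ∧ Wk E n w v := Iff.rfl

lemma wk_append : ∀ {m : ℕ} {n : ℕ} {u v x : V}, Wk E m u v → Wk E n v x → Wk E (m+n) u x := by
  intro m
  induction m with
  | zero =>
    intro n u v x h1 h2
    rw [wk_zero] at h1; subst h1; simpa using h2
  | succ m ih =>
    intro n u v x h1 h2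
    obtain ⟨w, hw, h1⟩ := h1
    rw [Nat.succ_add]
    exact ⟨w, hw, ih h1 h2⟩

lemma wk_single {u v : V} (h : E u v) : Wk E 1 u v := ⟨v, h, rfl⟩

lemma wk_tail {n : ℕ} {u v x : V} (h : Wk E n u v) (hx : E v x) : Wk E (n+1) u x :=
  wk_append h (wk_single hx)

lemma wk_symm (hsymm : ∀ u v, E u v → E v u) :
    ∀ {n : ℕ} {u v : V}, Wk E n u v → Wk E n v u := by
  intro n
  induction n with
  | zero => intro u v h; rw [wk_zero] at h ⊢; exact h.symm
  | succ n ih =>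
    intro u v h
    obtain ⟨w, hw, h⟩ := h
    exact wk_tail (ih h) (hsymm _ _ hw)

lemma wk_fun : ∀ {n : ℕ} {u v : V}, Wk E n u v →
    ∃ f : ℕ → V, f 0 = u ∧ f n = v ∧ ∀ i, i < n → E (f i) (f (i+1)) := by
  intro n
  induction n with
  | zero =>
    intro u v h; rw [wk_zero] at h; subst h
    exact ⟨fun _ => u, rfl, rfl, fun i hi => absurd hi (by omega)⟩
  | succ n ih =>
    intro u v h
    obtain ⟨w, hw, h⟩ := h
    obtain ⟨g, hg0, hgn, hge⟩ := ih h
    refine ⟨fun i => if i = 0 then u else g (i-1), by simp, by simp [hgn], ?_⟩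
    intro i hi
    rcases Nat.eq_zero_or_pos i with h0 | h0
    · subst h0; simpa [hg0] using hw
    · have h1 : ¬ (i = 0) := by omega
      have h2 : ¬ (i + 1 = 0) := by omega
      simp only [h1, h2, if_false]
      have : i - 1 + 1 = i := by omega
      have he := hge (i-1) (by omega)
      rw [this] at he
      simpa using he

/-- A non-bipartite symmetric graph has an odd closed walk. -/
lemma exists_odd_closed (hsymm : ∀ u v, E u v → E v u) (hnb : ¬ IsBipartite E) :
    ∃ x k, Wk E (2*k+1) x x := by
  classical
  by_contra hodd
  push_neg at hodd
  apply hnb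
  let s : Setoid V := ⟨fun u v => ∃ n, Wk E n u v,
    ⟨fun v => ⟨0, rfl⟩,
     fun h => by obtain ⟨n, h⟩ := h; exact ⟨n, wk_symm hsymm h⟩,
     fun h1 h2 => by obtain ⟨m, h1⟩ := h1; obtain ⟨n, h2⟩ := h2; exact ⟨m+n, wk_append h1 h2⟩⟩⟩
  let rep : V → V := fun v => (Quotient.mk s v).out
  refine ⟨fun v => if ∃ k, Wk E (2*k+1) (rep v) v then true else false, ?_⟩
  intro u v huv hc
  beta_reduce at hc
  have hrepeq : rep u = rep v := by
    have : Quotient.mk s u = Quotient.mk s v := Quotient.sound ⟨1, wk_single huv⟩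
    simp only [rep, this]
  have hru : ∃ n, Wk E n (rep u) u := Quotient.mk_out u
  by_cases hPu : ∃ k, Wk E (2*k+1) (rep u) u
  · have hPv : ∃ k, Wk E (2*k+1) (rep v) v := by
      by_contra hPv
      rw [if_pos hPu, if_neg hPv] at hc
      exact Bool.noConfusion hc
    obtain ⟨k1, o1⟩ := hPu
    obtain ⟨k2, o2⟩ := hPv
    rw [← hrepeq] at o2
    -- odd walk rep u → u, edge u v : even-ish; combine with odd walk rep u → v reversed
    have w1 : Wk E (2*k1+1+1) (rep u) v := wk_tail o1 huv
    have w2 : Wk E (2*k2+1) v (rep u) := wk_symm hsymm o2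
    have w3 : Wk E ((2*k1+1+1) + (2*k2+1)) (rep u) (rep u) := wk_append w1 w2
    have he : (2*k1+1+1) + (2*k2+1) = 2*(k1+k2+1)+1 := by omega
    rw [he] at w3
    exact hodd _ _ w3
  · have hPv : ¬ ∃ k, Wk E (2*k+1) (rep v) v := by
      by_contra hPv
      rw [if_neg hPu, if_pos hPv] at hc
      exact Bool.noConfusion hc
    obtain ⟨n, hn⟩ := hru
    rcases Nat.even_or_odd n with he | ho
    · obtain ⟨k, hk⟩ := he
      have : Wk E (2*k+1) (rep v) v := by
        rw [← hrepeq]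
        have := wk_tail hn huv
        have he2 : n + 1 = 2*k+1 := by omega
        rwa [he2] at this
      exact hPv ⟨k, this⟩
    · obtain ⟨k, hk⟩ := ho
      exact hPu ⟨k, by rwa [hk] at hn⟩

end Walks

section Poset
variable {V : Type*} {E : V → V → Prop}

/-- The multihomomorphism `K₂ → (V,E)` given by an edge. -/
def edgeM (hsymm : ∀ u v, E u v → E v u) (a b : V) (h : E a b) : Mhom K2 E :=
  ⟨fun i => if i then {b} else {a}, by
    constructor
    · intro u; cases u <;> simp
    · intro u v x y huv hx hy
      cases u <;> cases v
      · exact absurd rfl huv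
      · have hx' : x = a := hx
        have hy' : y = b := hy
        subst hx'; subst hy'; exact h
      · have hx' : x = b := hx
        have hy' : y = a := hy
        subst hx'; subst hy'; exact hsymm _ _ h
      · exact absurd rfl huv⟩

lemma mhom_le {m m' : Mhom K2 E} (h : ∀ i, m.1 i ⊆ m'.1 i) : m ≤ m' := h

lemma pc_symm {m m' : Mhom K2 E} (h : PosetConnected m m') : PosetConnected m' m :=
  @Std.Symm.symm _ _ (@Relation.ReflTransGen.stdSymm _ _ ⟨fun _ _ hx => Or.symm hx⟩) _ _ h

/-- Change the `false` coordinate of an edge multihom. -/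
lemma step_false (hsymm : ∀ u v, E u v → E v u) {a b c : V} (hab : E a b) (hcb : E c b) :
    PosetConnected (edgeM hsymm a b hab) (edgeM hsymm c b hcb) := by
  have hm2 : IsMultihom K2 E (fun i => if i then {b} else ({a, c} : Set V)) := by
    constructor
    · intro u; cases u <;> simp
    · intro u v x y huv hx hy
      cases u <;> cases v
      · exact absurd rfl huv
      · have hx' : x = a ∨ x = c := hx
        have hy' : y = b := hy
        subst hy'
        rcases hx' with rfl | rfl
        · exact hab
        · exact hcb
      · have hx' : x = b := hx
        have hy' : y = a ∨ y = c := hy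
        subst hx'
        rcases hy' with rfl | rfl
        · exact hsymm _ _ hab
        · exact hsymm _ _ hcb
      · exact absurd rfl huv
  let m2 : Mhom K2 E := ⟨_, hm2⟩
  have h1 : edgeM hsymm a b hab ≤ m2 := by
    apply mhom_le; intro i; cases i <;> simp [edgeM, m2]
  have h2 : edgeM hsymm c b hcb ≤ m2 := by
    apply mhom_le; intro i; cases i <;> simp [edgeM, m2]
  exact Relation.ReflTransGen.tail (Relation.ReflTransGen.single (Or.inl h1)) (Or.inr h2)

/-- Change the `true` coordinate of an edge multihom. -/
lemma step_true (hsymm : ∀ u v, E u v → E v u) {a b d : V} (hab : E a b) (had : E a d) :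
    PosetConnected (edgeM hsymm a b hab) (edgeM hsymm a d had) := by
  have hm2 : IsMultihom K2 E (fun i => if i then ({b, d} : Set V) else {a}) := by
    constructor
    · intro u; cases u <;> simp
    · intro u v x y huv hx hy
      cases u <;> cases v
      · exact absurd rfl huv
      · have hx' : x = a := hx
        have hy' : y = b ∨ y = d := hy
        subst hx'
        rcases hy' with rfl | rfl
        · exact hab
        · exact had
      · have hx' : x = b ∨ x = d := hx
        have hy' : y = a := hy
        subst hy'
        rcases hx' with rfl | rfl
        · exact hsymm _ _ hab
        · exact hsymm _ _ had
      · exact absurd rfl huv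
  let m2 : Mhom K2 E := ⟨_, hm2⟩
  have h1 : edgeM hsymm a b hab ≤ m2 := by
    apply mhom_le; intro i; cases i <;> simp [edgeM, m2]
  have h2 : edgeM hsymm a d had ≤ m2 := by
    apply mhom_le; intro i; cases i <;> simp [edgeM, m2]
  exact Relation.ReflTransGen.tail (Relation.ReflTransGen.single (Or.inl h1)) (Or.inr h2)

lemma chain (hsymm : ∀ u v, E u v → E v u) (g : ℕ → V) (hg : ∀ i, E (g i) (g (i+1))) :
    ∀ j, (Even j → PosetConnected (edgeM hsymm (g 0) (g 1) (hg 0))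
            (edgeM hsymm (g j) (g (j+1)) (hg j)))
       ∧ (¬ Even j → PosetConnected (edgeM hsymm (g 0) (g 1) (hg 0))
            (edgeM hsymm (g (j+1)) (g j) (hsymm _ _ (hg j)))) := by
  intro j
  induction j with
  | zero => exact ⟨fun _ => Relation.ReflTransGen.refl, fun h => absurd (Even.zero) h⟩
  | succ j ih =>
    constructor
    · intro hje
      have hjo : ¬ Even j := by simp [Nat.even_add_one] at hje; simpa using hje
      have h1 := ih.2 hjo
      -- from (g (j+1), g j) to (g (j+1), g (j+2))
      exact h1.trans (step_true hsymm (hsymm _ _ (hg j)) (hg (j+1)))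
    · intro hjo
      have hje : Even j := by simpa [Nat.even_add_one] using hjo
      have h1 := ih.1 hje
      -- from (g j, g (j+1)) to (g (j+2), g (j+1))
      exact h1.trans (step_false hsymm (hg j) (hsymm _ _ (hg (j+1))))

end Poset

theorem edge_connected_to_flipped_edge {V : Type*} [Fintype V] (E : V → V → Prop)
    (hsymm : ∀ u v, E u v → E v u) (hnb : ¬ IsBipartite E) :
    ∃ u v : V, E u v ∧ ∃ m m' : Mhom K2 E,
      m.1 = (fun i => if i then ({v} : Set V) else {u}) ∧
      m'.1 = (fun i => if i then ({u} : Set V) else {v}) ∧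
      PosetConnected m m' := by

  obtain ⟨x, k, hx⟩ := exists_odd_closed hsymm hnb
  set n := 2*k+1 with hn
  have hnpos : 0 < n := by omega
  obtain ⟨f, hf0, hfn, hfe⟩ := wk_fun hx
  have hfnf0 : f n = f 0 := by rw [hfn, hf0]
  let g : ℕ → V := fun i => f (i % n)
  have key : ∀ i : ℕ, (i+1) % n = (i % n + 1) % n := by
    intro i
    conv_lhs => rw [Nat.add_mod]
    conv_rhs => rw [Nat.add_mod, Nat.mod_mod_of_dvd _ dvd_rfl]
  have hg : ∀ i, E (g i) (g (i+1)) := by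
    intro i
    have hlt : i % n < n := Nat.mod_lt _ hnpos
    show E (f (i % n)) (f ((i+1) % n))
    have he := hfe _ hlt
    by_cases h : i % n + 1 < n
    · rw [key i, Nat.mod_eq_of_lt h]
      exact he
    · have heq : i % n + 1 = n := by omega
      have h2 : (i+1) % n = 0 := by rw [key i, heq, Nat.mod_self]
      rw [h2]
      rw [heq, hfnf0] at he
      exact he
  have hg1 : g (n+1) = g 1 := by
    show f ((n+1) % n) = f (1 % n)
    rw [Nat.add_mod_left]
  have hgn : g n = g 0 := by
    show f (n % n) = f (0 % n)
    rw [Nat.mod_self, Nat.zero_mod]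
  have hoddn : ¬ Even n := Nat.not_even_iff_odd.mpr ⟨k, hn⟩
  have hcon := (chain hsymm g hg n).2 hoddn
  refine ⟨g 0, g 1, hg 0, edgeM hsymm (g 0) (g 1) (hg 0),
    edgeM hsymm (g (n+1)) (g n) (hsymm _ _ (hg n)), rfl, ?_, hcon⟩
  funext i
  cases i
  · show ({g (n+1)} : Set V) = {g 1}
    rw [hg1]
  · show ({g n} : Set V) = {g 0}
    rw [hgn]
end

section
/- Let P be a finite poset admitting a sub-Taylor polymorphism. Then for every basepoint p₀ ∈ P, the fundamental group π₁(WithUpperSet P, p₀) is abelian. -/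
open Topology

/-- A sub-Taylor polymorphism of arity `n` on a poset `P`: a monotone map
`t : (Fin n → P) → P` with `x ≤ t (fun _ => x)`, together with binary monotone lower bounds
`sᵢ` witnessing the Taylor inequalities. -/
def HasSubTaylor (P : Type*) [PartialOrder P] (n : ℕ) : Prop :=
  ∃ t : (Fin n → P) →o P,
    (∀ x : P, x ≤ t (fun _ => x)) ∧
      ∀ i : Fin n, ∃ (s : P × P →o P) (α β : Fin n → Fin 2), α i ≠ β i ∧
        ∀ x : Fin 2 → P, s (x 0, x 1) ≤ t (x ∘ α) ∧ s (x 0, x 1) ≤ t (x ∘ β)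


open Topology CategoryTheory FundamentalGroupoid unitInterval

noncomputable section
namespace SubTaylorProof

universe u
variable {P : Type u} [PartialOrder P]

attribute [local instance] Path.Homotopic.setoid

lemma isOpen_of_isUpperSet_pi {ι : Type*} [Finite ι]
    {S : Set (ι → Topology.WithUpperSet P)} (hS : IsUpperSet S) : IsOpen S := by
  have hrw : S = ⋃ x ∈ S, Set.Ici x := by
    apply Set.Subset.antisymm
    · exact fun x hx => Set.mem_biUnion hx Set.self_mem_Ici
    · simp only [Set.iUnion_subset_iff]
      exact fun x hx y hy => hS hy hx
  rw [hrw]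
  refine isOpen_biUnion fun x _ => ?_
  have hIci : Set.Ici x = Set.pi Set.univ fun i => Set.Ici (x i) := by
    ext y
    simp [Set.mem_Ici, Pi.le_def]
  rw [hIci]
  exact isOpen_set_pi Set.finite_univ fun i _ =>
    Topology.IsUpperSet.isOpen_iff_isUpperSet.mpr (isUpperSet_Ici _)

/-- A monotone map on finite products of posets, as a continuous map of upper-set spaces. -/
def pimapC {ι : Type*} [Finite ι] (f : (ι → P) →o P) :
    C((ι → Topology.WithUpperSet P), Topology.WithUpperSet P) where
  toFun x := Topology.WithUpperSet.toUpperSet (f fun i => Topology.WithUpperSet.ofUpperSet (x i))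
  continuous_toFun := by
    rw [continuous_def]
    intro U hU
    apply isOpen_of_isUpperSet_pi
    exact (Topology.IsUpperSet.isOpen_iff_isUpperSet.mp hU).preimage
      (fun x y hxy => f.monotone fun i => hxy i)

/-- The "order homotopy" between two pointwise-comparable continuous maps into an
upper-set space. -/
def ordHomotopy {Z : Type*} [TopologicalSpace Z]
    (f g : C(Z, Topology.WithUpperSet P)) (h : ∀ z, f z ≤ g z) :
    ContinuousMap.Homotopy f g where
  toFun p := if p.1 = 0 then f p.2 else g p.2
  continuous_toFun := by
    rw [continuous_def]
    intro U hU
    have hU' : IsUpperSet U := Topology.IsUpperSet.isOpen_iff_isUpperSet.mp hU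
    have heq : (fun p : I × Z => if p.1 = 0 then f p.2 else g p.2) ⁻¹' U
        = Prod.snd ⁻¹' (f ⁻¹' U) ∪ ({(0 : I)}ᶜ ×ˢ (g ⁻¹' U)) := by
      ext ⟨s, z⟩
      simp only [Set.mem_preimage, Set.mem_union, Set.mem_prod, Set.mem_compl_iff,
        Set.mem_singleton_iff]
      constructor
      · intro hm
        by_cases hs : s = 0
        · left; rwa [if_pos hs] at hm
        · right; rw [if_neg hs] at hm; exact ⟨hs, hm⟩
      · rintro (hf | ⟨hs, hg⟩)
        · by_cases hs : s = 0
          · rwa [if_pos hs]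
          · rw [if_neg hs]; exact hU' (h z) hf
        · rwa [if_neg hs]
    rw [heq]
    exact ((hU.preimage f.continuous).preimage continuous_snd).union
      (isOpen_compl_singleton.prod (hU.preimage g.continuous))
  map_zero_left z := by simp
  map_one_left z := by
    have h10 : (1 : I) ≠ 0 := by
      intro hh
      have := congrArg (Subtype.val : I → ℝ) hh
      norm_num at this
    simp only [if_neg h10]

/-- Naturality: a homotopy conjugates induced maps on path classes. -/
theorem homotopy_conj {Z Y : TopCat.{u}} {f g : C(Z, Y)} (H : ContinuousMap.Homotopy f g)
    {z₀ z₁ : Z} (p : fromTop z₀ ⟶ fromTop z₁) :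
    (πₘ (TopCat.ofHom f)).map p ≫ (⟦H.evalAt z₁⟧ : fromTop (f z₁) ⟶ fromTop (g z₁)) =
      (⟦H.evalAt z₀⟧ : fromTop (f z₀) ⟶ fromTop (g z₀)) ≫ (πₘ (TopCat.ofHom g)).map p :=
  (H.eq_diag_path p).1.trans (H.eq_diag_path p).2.symm

/-- The "step path" from `a` up to `b` in an upper-set space. -/
def stepP {a b : Topology.WithUpperSet P} (h : a ≤ b) : Path a b :=
  (ordHomotopy (ContinuousMap.const Unit a) (ContinuousMap.const Unit b)
    (fun _ => h)).evalAt ()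

section QuotLemmas

variable {A B C : Type u} [TopologicalSpace A] [TopologicalSpace B] [TopologicalSpace C]

theorem map_lift' {x₀ x₁ : A} (P₀ : Path x₀ x₁) (f : C(A, B)) :
    (⟦P₀.map f.continuous⟧ : Path.Homotopic.Quotient _ _) =
      Path.Homotopic.Quotient.map (⟦P₀⟧ : Path.Homotopic.Quotient x₀ x₁) f := rfl

theorem comp_lift' {x₀ x₁ x₂ : A} (P₀ : Path x₀ x₁) (P₁ : Path x₁ x₂) :
    (⟦P₀.trans P₁⟧ : Path.Homotopic.Quotient _ _) =
      Path.Homotopic.Quotient.trans (⟦P₀⟧ : Path.Homotopic.Quotient x₀ x₁) ⟦P₁⟧ := rfl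

theorem pi_lift' {ι : Type*} {X : ι → Type*} [∀ i, TopologicalSpace (X i)] {as bs : ∀ i, X i}
    (γ : ∀ i, Path (as i) (bs i)) :
    (Path.Homotopic.pi fun i => (⟦γ i⟧ : Path.Homotopic.Quotient (as i) (bs i))) =
      ⟦Path.pi γ⟧ := Path.Homotopic.pi_lift γ

lemma mapFn_mapFn {a b : A} (q : Path.Homotopic.Quotient a b) (f : C(A, B)) (g : C(B, C)) :
    (q.map f).map g = q.map (g.comp f) := by
  induction q using Quotient.inductionOn with
  | h γ =>
    rw [← map_lift', ← map_lift', ← map_lift',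
      Path.map_map]
    rfl

lemma mapFn_trans {a b c : A} (q : Path.Homotopic.Quotient a b)
    (q' : Path.Homotopic.Quotient b c) (f : C(A, B)) :
    (q.trans q').map f = (q.map f).trans (q'.map f) := by
  induction q, q' using Quotient.inductionOn₂ with
  | h γ γ' =>
    rw [← comp_lift', ← map_lift', ← map_lift',
      ← map_lift', ← comp_lift', Path.map_trans]

lemma mapFn_id {a b : A} (q : Path.Homotopic.Quotient a b) :
    q.map (ContinuousMap.id A) = q := by
  induction q using Quotient.inductionOn with
  | h γ =>
    rw [← map_lift']
    exact congrArg _ (Path.map_id γ)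

end QuotLemmas

section PiLemmas

variable {m k : ℕ}

lemma pi_reindex (α : Fin m → Fin k) {p₀ : Topology.WithUpperSet P}
    (w : Fin k → Path.Homotopic.Quotient p₀ p₀) :
    Path.Homotopic.pi (fun j => w (α j)) =
      Path.Homotopic.Quotient.map (Path.Homotopic.pi w)
        (⟨fun z j => z (α j), continuous_pi fun j => continuous_apply _⟩ :
          C((Fin k → Topology.WithUpperSet P), (Fin m → Topology.WithUpperSet P))) := by
  have hw : w = fun i => ⟦(w i).out⟧ := funext fun i => (Quotient.out_eq _).symm
  rw [hw]
  rw [pi_lift', pi_lift', ← map_lift']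
  apply congrArg
  ext u
  rfl

lemma pi_diag {p₀ : Topology.WithUpperSet P} (w : Path.Homotopic.Quotient p₀ p₀) :
    Path.Homotopic.pi (fun _ : Fin m => w) =
      Path.Homotopic.Quotient.map w
        (⟨fun x _ => x, continuous_pi fun _ => continuous_id⟩ :
          C(Topology.WithUpperSet P, (Fin m → Topology.WithUpperSet P))) := by
  induction w using Quotient.inductionOn with
  | h γ =>
    rw [← map_lift',
      show (Path.Homotopic.pi fun _ : Fin m => (⟦γ⟧ : Path.Homotopic.Quotient p₀ p₀))
        = ⟦Path.pi fun _ => γ⟧ from pi_lift' _]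
    apply congrArg
    ext u
    rfl

end PiLemmas

end SubTaylorProof

theorem comm_of_taylor {G : Type*} [Group G] {n : ℕ} (T : (Fin n → G) → G)
    (hmul : ∀ x y : Fin n → G, T (x * y) = T x * T y)
    (hid : ∀ g : G, T (fun _ => g) = g)
    (htay : ∀ i : Fin n, ∃ α β : Fin n → Fin 2, α i ≠ β i ∧
      ∀ x : Fin 2 → G, T (fun j => x (α j)) = T (fun j => x (β j)))
    (a b : G) : a * b = b * a := by
  classical
  let Th : (Fin n → G) →* G := MonoidHom.mk' T (fun x y => hmul x y)
  set φ : Fin n → G → G := fun j g => T (Pi.mulSingle j g) with hφ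
  have hcomm : ∀ j k : Fin n, j ≠ k → ∀ u v : G, Commute (φ j u) (φ k v) := by
    intro j k hjk u v
    exact (Pi.mulSingle_commute hjk u v).map Th
  have hone : ∀ j, φ j 1 = 1 := by
    intro j
    have : φ j 1 = Th (Pi.mulSingle j (1 : G)) := rfl
    rw [this, Pi.mulSingle_one, map_one]
  have hdec : ∀ x : Fin n → G,
      T x = Finset.univ.noncommProd (fun j => φ j (x j))
        (fun j _ k _ hjk => hcomm j k hjk _ _) := by
    intro x
    conv_lhs => rw [show T x = Th x from rfl, ← Finset.noncommProd_mulSingle x]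
    exact Finset.map_noncommProd _ _ _ Th
  have hA : ∀ i : Fin n, ∀ u v : G, Commute (φ i u) (φ i v) := by
    intro i u v
    obtain ⟨α, β, hne, hT⟩ := htay i
    set x : Fin 2 → G := fun k => if k = α i then u else 1 with hx
    have h0 := hT x
    rw [hdec fun j => x (α j), hdec fun j => x (β j)] at h0
    erw [← Finset.mul_noncommProd_erase Finset.univ (Finset.mem_univ i)
          (fun j => φ j (x (α j))) _,
        ← Finset.mul_noncommProd_erase Finset.univ (Finset.mem_univ i)
          (fun j => φ j (x (β j))) _] at h0
    have hxa : x (α i) = u := if_pos rfl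
    have hxb : x (β i) = 1 := if_neg (fun hh => hne hh.symm)
    rw [hxa, hxb, hone, one_mul] at h0
    have hLα : Commute (φ i v)
        ((Finset.univ.erase i).noncommProd (fun j => φ j (x (α j)))
          (fun j _ k _ hjk => hcomm j k hjk _ _)) :=
      Finset.noncommProd_commute _ _ _ _
        (fun j hj => hcomm i j (Finset.mem_erase.mp hj).1.symm v _)
    have hLβ : Commute (φ i v)
        ((Finset.univ.erase i).noncommProd (fun j => φ j (x (β j)))
          (fun j _ k _ hjk => hcomm j k hjk _ _)) :=
      Finset.noncommProd_commute _ _ _ _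
        (fun j hj => hcomm i j (Finset.mem_erase.mp hj).1.symm v _)
    have hrw : φ i u = _ * _⁻¹ := eq_mul_inv_of_mul_eq h0
    rw [hrw]
    exact (hLβ.symm.mul_left hLα.symm.inv_left).symm.symm
  have goal : Commute a b := by
    rw [← hid a, ← hid b, hdec (fun _ => a), hdec (fun _ => b)]
    refine Finset.noncommProd_commute _ _ _ _ (fun k _ => ?_)
    refine (Finset.noncommProd_commute _ _ _ _ (fun j _ => ?_)).symm
    rcases eq_or_ne k j with rfl | hkj
    · exact hA k b a
    · exact hcomm k j hkj b a
  exact goal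

namespace SubTaylorProof

section Assembly

variable {P : Type u} [PartialOrder P] {n : ℕ}

/-- Diagonal map as a continuous map. -/
def diagCn (m : ℕ) : C(Topology.WithUpperSet P, (Fin m → Topology.WithUpperSet P)) :=
  ⟨fun x _ => x, continuous_pi fun _ => continuous_id⟩

/-- Reindexing along `α`. -/
def reindexC {m k : ℕ} (α : Fin m → Fin k) :
    C((Fin k → Topology.WithUpperSet P), (Fin m → Topology.WithUpperSet P)) :=
  ⟨fun z j => z (α j), continuous_pi fun j => continuous_apply _⟩

def q0 (t : (Fin n → P) →o P) (p₀ : Topology.WithUpperSet P) : Topology.WithUpperSet P :=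
  pimapC t fun _ => p₀

/-- The conjugated polymorphism action on homotopy classes of loops. -/
def PhiMap (t : (Fin n → P) →o P) (p₀ : Topology.WithUpperSet P)
    (ρ : (FundamentalGroupoid.mk p₀ : FundamentalGroupoid (Topology.WithUpperSet P)) ⟶
      FundamentalGroupoid.mk (q0 t p₀))
    (y : Fin n → ((FundamentalGroupoid.mk (q0 t p₀) :
        FundamentalGroupoid (Topology.WithUpperSet P)) ⟶ FundamentalGroupoid.mk (q0 t p₀))) :
    (FundamentalGroupoid.mk (q0 t p₀) : FundamentalGroupoid (Topology.WithUpperSet P)) ⟶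
      FundamentalGroupoid.mk (q0 t p₀) := by
  have p : Path.Homotopic.Quotient (fun _ : Fin n => p₀) (fun _ : Fin n => p₀) :=
    Path.Homotopic.pi fun i => ρ ≫ y i ≫ Groupoid.inv ρ
  exact p.map (pimapC t)

end Assembly

end SubTaylorProof

namespace SubTaylorProof

section Assembly2

variable {P : Type u} [PartialOrder P] {n : ℕ}

attribute [local instance] Path.Homotopic.setoid

abbrev GHom {W : Type u} [TopologicalSpace W] (a b : W) :=
  (FundamentalGroupoid.mk a : FundamentalGroupoid W) ⟶ FundamentalGroupoid.mk b

theorem homotopy_conj'' {Z Y : Type u} [TopologicalSpace Z] [TopologicalSpace Y] {f g : C(Z, Y)}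
    (H : ContinuousMap.Homotopy f g) {z₀ z₁ : Z} (p : Path.Homotopic.Quotient z₀ z₁) :
    ((p.map f : GHom (f z₀) (f z₁)) ≫ (⟦H.evalAt z₁⟧ : GHom (f z₁) (g z₁)) :
        GHom (f z₀) (g z₁)) =
      ((⟦H.evalAt z₀⟧ : GHom (f z₀) (g z₀)) ≫ (p.map g : GHom (g z₀) (g z₁)) :
        GHom (f z₀) (g z₁)) :=
  (H.eq_diag_path (X := TopCat.of Z) (Y := TopCat.of Y) p).1.trans
    (H.eq_diag_path (X := TopCat.of Z) (Y := TopCat.of Y) p).2.symm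

theorem PhiMap_eq (t : (Fin n → P) →o P) (p₀ : Topology.WithUpperSet P)
    (ρ : GHom p₀ (q0 t p₀)) (y : Fin n → GHom (q0 t p₀) (q0 t p₀)) :
    PhiMap t p₀ ρ y =
      ((Path.Homotopic.pi fun i => ρ ≫ y i ≫ Groupoid.inv ρ :
        Path.Homotopic.Quotient (fun _ : Fin n => p₀) (fun _ : Fin n => p₀)).map
          (pimapC t) :
        Path.Homotopic.Quotient (q0 t p₀) (q0 t p₀)) := rfl

theorem PhiMap_comp (t : (Fin n → P) →o P) (p₀ : Topology.WithUpperSet P)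
    (ρ : GHom p₀ (q0 t p₀)) (y z : Fin n → GHom (q0 t p₀) (q0 t p₀)) :
    PhiMap t p₀ ρ (fun i => y i ≫ z i) = PhiMap t p₀ ρ y ≫ PhiMap t p₀ ρ z := by
  rw [PhiMap_eq, PhiMap_eq, PhiMap_eq]
  have h1 : (fun i => ρ ≫ (y i ≫ z i) ≫ Groupoid.inv ρ)
      = fun i => (ρ ≫ y i ≫ Groupoid.inv ρ) ≫ (ρ ≫ z i ≫ Groupoid.inv ρ) := by
    funext i
    simp
  rw [h1]
  have h2 : (Path.Homotopic.pi
        (fun i => (ρ ≫ y i ≫ Groupoid.inv ρ) ≫ (ρ ≫ z i ≫ Groupoid.inv ρ)) :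
        Path.Homotopic.Quotient (fun _ : Fin n => p₀) (fun _ : Fin n => p₀))
      = (Path.Homotopic.pi fun i => ρ ≫ y i ≫ Groupoid.inv ρ :
          Path.Homotopic.Quotient (fun _ : Fin n => p₀) (fun _ : Fin n => p₀)).trans
        (Path.Homotopic.pi fun i => ρ ≫ z i ≫ Groupoid.inv ρ) :=
    (Path.Homotopic.comp_pi_eq_pi_comp _ _).symm
  rw [h2, mapFn_trans]
  rfl

lemma inv_comp_assoc' {C : Type*} [Groupoid C] {x y z : C} (f : x ⟶ y) (g : y ⟶ z) :
    Groupoid.inv f ≫ f ≫ g = g := by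
  rw [← Category.assoc, Groupoid.inv_comp, Category.id_comp]

lemma comp_inv_assoc' {C : Type*} [Groupoid C] {x y z : C} (f : x ⟶ y) (g : x ⟶ z) :
    f ≫ Groupoid.inv f ≫ g = g := by
  rw [← Category.assoc, Groupoid.comp_inv, Category.id_comp]

/-- The homotopy between the identity and `t` composed with the diagonal. -/
def idemHomotopy (t : (Fin n → P) →o P) (h1 : ∀ x : P, x ≤ t fun _ => x) :
    ContinuousMap.Homotopy (ContinuousMap.id (Topology.WithUpperSet P))
      ((pimapC t).comp (diagCn n)) :=
  ordHomotopy _ _ (fun x => h1 (Topology.WithUpperSet.ofUpperSet x))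

/-- The path class from `p₀` to `q0 t p₀`. -/
def rhoQ (t : (Fin n → P) →o P) (h1 : ∀ x : P, x ≤ t fun _ => x)
    (p₀ : Topology.WithUpperSet P) : GHom p₀ (q0 t p₀) :=
  ⟦(idemHomotopy t h1).evalAt p₀⟧

theorem PhiMap_idem (t : (Fin n → P) →o P) (h1 : ∀ x : P, x ≤ t fun _ => x)
    (p₀ : Topology.WithUpperSet P) (y : GHom (q0 t p₀) (q0 t p₀)) :
    PhiMap t p₀ (rhoQ t h1 p₀) (fun _ => y) = y := by
  rw [PhiMap_eq]
  have hb : (fun i : Fin n => rhoQ t h1 p₀ ≫ (fun _ : Fin n => y) i ≫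
        Groupoid.inv (rhoQ t h1 p₀))
      = fun _ : Fin n => rhoQ t h1 p₀ ≫ y ≫ Groupoid.inv (rhoQ t h1 p₀) := rfl
  rw [hb]
  set w : GHom p₀ p₀ := rhoQ t h1 p₀ ≫ y ≫ Groupoid.inv (rhoQ t h1 p₀) with hwdef
  have hd : (Path.Homotopic.pi fun _ : Fin n => (w : Path.Homotopic.Quotient p₀ p₀) :
      Path.Homotopic.Quotient (fun _ : Fin n => p₀) (fun _ : Fin n => p₀))
      = Path.Homotopic.Quotient.map (w : Path.Homotopic.Quotient p₀ p₀) (diagCn n) :=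
    pi_diag _
  erw [hd, mapFn_mapFn]
  -- now : (w.map ((pimapC t).comp (diagCn n)) : _) = y
  have hc := homotopy_conj'' (idemHomotopy t h1) (z₀ := p₀) (z₁ := p₀)
    (w : Path.Homotopic.Quotient p₀ p₀)
  have hidw : (Path.Homotopic.Quotient.map (w : Path.Homotopic.Quotient p₀ p₀)
      (ContinuousMap.id (Topology.WithUpperSet P)) : GHom p₀ p₀) = w := mapFn_id _
  rw [hidw] at hc
  -- hc : w ≫ ⟦evalAt p₀⟧ = ⟦evalAt p₀⟧ ≫ w.map ((pimapC t).comp (diagCn n))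
  have hrho : (⟦(idemHomotopy t h1).evalAt p₀⟧ :
      GHom ((ContinuousMap.id (Topology.WithUpperSet P)) p₀)
        (((pimapC t).comp (diagCn n)) p₀)) = rhoQ t h1 p₀ := rfl
  rw [hrho] at hc
  have hfin : (Path.Homotopic.Quotient.map (w : Path.Homotopic.Quotient p₀ p₀)
      ((pimapC t).comp (diagCn n)) : GHom (q0 t p₀) (q0 t p₀))
      = Groupoid.inv (rhoQ t h1 p₀) ≫ w ≫ rhoQ t h1 p₀ := by
    erw [hc, inv_comp_assoc']
  rw [hfin, hwdef]
  rw [Category.assoc, Category.assoc, inv_comp_assoc', Groupoid.inv_comp,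
    Category.comp_id]

def pairOrd (s : P × P →o P) : (Fin 2 → P) →o P :=
  ⟨fun z => s (z 0, z 1), fun a b hab => s.monotone ⟨hab 0, hab 1⟩⟩

theorem PhiMap_taylor (t : (Fin n → P) →o P) (p₀ : Topology.WithUpperSet P)
    (ρ : GHom p₀ (q0 t p₀)) (s : P × P →o P) (α β : Fin n → Fin 2)
    (hin : ∀ x : Fin 2 → P, s (x 0, x 1) ≤ t (x ∘ α) ∧ s (x 0, x 1) ≤ t (x ∘ β))
    (y : Fin 2 → GHom (q0 t p₀) (q0 t p₀)) :
    PhiMap t p₀ ρ (fun j => y (α j)) = PhiMap t p₀ ρ (fun j => y (β j)) := by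
  have hσle : pimapC (pairOrd s) (fun _ => p₀) ≤ q0 t p₀ :=
    (hin fun _ => Topology.WithUpperSet.ofUpperSet p₀).1
  have main : ∀ γ : Fin n → Fin 2,
      (∀ z : Fin 2 → Topology.WithUpperSet P,
        pimapC (pairOrd s) z ≤ ((pimapC t).comp (reindexC γ)) z) →
      PhiMap t p₀ ρ (fun j => y (γ j)) =
        Groupoid.inv
            (⟦stepP hσle⟧ : GHom (pimapC (pairOrd s) fun _ => p₀) (q0 t p₀)) ≫
          ((Path.Homotopic.pi fun k => ρ ≫ y k ≫ Groupoid.inv ρ :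
              Path.Homotopic.Quotient (fun _ : Fin 2 => p₀) (fun _ : Fin 2 => p₀)).map
              (pimapC (pairOrd s)) :
            GHom (pimapC (pairOrd s) fun _ => p₀) (pimapC (pairOrd s) fun _ => p₀)) ≫
          (⟦stepP hσle⟧ : GHom (pimapC (pairOrd s) fun _ => p₀) (q0 t p₀)) := by
    intro γ hγ
    have hP : PhiMap t p₀ ρ (fun j => y (γ j))
        = ((Path.Homotopic.pi fun k => ρ ≫ y k ≫ Groupoid.inv ρ :
              Path.Homotopic.Quotient (fun _ : Fin 2 => p₀) (fun _ : Fin 2 => p₀)).map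
            ((pimapC t).comp (reindexC γ)) : GHom (q0 t p₀) (q0 t p₀)) := by
      rw [PhiMap_eq]
      beta_reduce
      rw [pi_reindex γ (fun k => ρ ≫ y k ≫ Groupoid.inv ρ), mapFn_mapFn]
      rfl
    have hev : (⟦(ordHomotopy (pimapC (pairOrd s)) ((pimapC t).comp (reindexC γ))
          hγ).evalAt (fun _ => p₀)⟧ :
        GHom (pimapC (pairOrd s) fun _ => p₀) (q0 t p₀)) = ⟦stepP hσle⟧ := by
      have hpe : ((ordHomotopy (pimapC (pairOrd s)) ((pimapC t).comp (reindexC γ))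
            hγ).evalAt (fun _ => p₀) :
          Path (pimapC (pairOrd s) fun _ => p₀) (q0 t p₀)) = stepP hσle := rfl
      exact congrArg _ hpe
    have hc' : (((Path.Homotopic.pi fun k => ρ ≫ y k ≫ Groupoid.inv ρ :
            Path.Homotopic.Quotient (fun _ : Fin 2 => p₀) (fun _ : Fin 2 => p₀)).map
            (pimapC (pairOrd s)) :
          GHom (pimapC (pairOrd s) fun _ => p₀) (pimapC (pairOrd s) fun _ => p₀)) ≫
          (⟦(ordHomotopy (pimapC (pairOrd s)) ((pimapC t).comp (reindexC γ))
              hγ).evalAt (fun _ => p₀)⟧ :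
            GHom (pimapC (pairOrd s) fun _ => p₀) (q0 t p₀)) :
          GHom (pimapC (pairOrd s) fun _ => p₀) (q0 t p₀)) =
        ((⟦(ordHomotopy (pimapC (pairOrd s)) ((pimapC t).comp (reindexC γ))
            hγ).evalAt (fun _ => p₀)⟧ :
          GHom (pimapC (pairOrd s) fun _ => p₀) (q0 t p₀)) ≫
          ((Path.Homotopic.pi fun k => ρ ≫ y k ≫ Groupoid.inv ρ :
              Path.Homotopic.Quotient (fun _ : Fin 2 => p₀) (fun _ : Fin 2 => p₀)).map
            ((pimapC t).comp (reindexC γ)) : GHom (q0 t p₀) (q0 t p₀)) :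
          GHom (pimapC (pairOrd s) fun _ => p₀) (q0 t p₀)) :=
      homotopy_conj'' (ordHomotopy (pimapC (pairOrd s)) ((pimapC t).comp (reindexC γ)) hγ)
        (z₀ := (fun _ => p₀ : Fin 2 → Topology.WithUpperSet P))
        (z₁ := (fun _ => p₀ : Fin 2 → Topology.WithUpperSet P))
        (Path.Homotopic.pi fun k => ρ ≫ y k ≫ Groupoid.inv ρ)
    erw [hP, ← hev, hc', inv_comp_assoc']
  rw [main α (fun z => (hin fun k => Topology.WithUpperSet.ofUpperSet (z k)).1),
    main β (fun z => (hin fun k => Topology.WithUpperSet.ofUpperSet (z k)).2)]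

def autOfHom {C : Type*} [Groupoid C] {x : C} (f : x ⟶ x) : End x :=
  f

lemma autOfHom_hom {C : Type*} [Groupoid C] {x : C} (f : x ⟶ x) : (autOfHom f : x ⟶ x) = f := rfl

lemma FG_mul_hom {W : Type u} [TopologicalSpace W] {w : W}
    (a b : FundamentalGroup W w) : (a * b : GHom w w) = (b : GHom w w) ≫ (a : GHom w w) := rfl

/-- The induced `n`-ary operation on the fundamental group at `q0 t p₀`. -/
def Tfun (t : (Fin n → P) →o P) (h1 : ∀ x : P, x ≤ t fun _ => x)
    (p₀ : Topology.WithUpperSet P)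
    (gv : Fin n → FundamentalGroup (Topology.WithUpperSet P) (q0 t p₀)) :
    FundamentalGroup (Topology.WithUpperSet P) (q0 t p₀) :=
  autOfHom (PhiMap t p₀ (rhoQ t h1 p₀) (fun i => (gv i : GHom (q0 t p₀) (q0 t p₀))))

theorem comm_aux (t : (Fin n → P) →o P) (h1 : ∀ x : P, x ≤ t fun _ => x)
    (h2 : ∀ i : Fin n, ∃ (s : P × P →o P) (α β : Fin n → Fin 2), α i ≠ β i ∧
        ∀ x : Fin 2 → P, s (x 0, x 1) ≤ t (x ∘ α) ∧ s (x 0, x 1) ≤ t (x ∘ β))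
    (p₀ : Topology.WithUpperSet P) :
    ∀ a b : FundamentalGroup (Topology.WithUpperSet P) p₀, a * b = b * a := by
  have hmul : ∀ x y : Fin n → FundamentalGroup (Topology.WithUpperSet P) (q0 t p₀),
      Tfun t h1 p₀ (x * y) = Tfun t h1 p₀ x * Tfun t h1 p₀ y := by
    intro x y
    have h3 : (fun i => (((x * y) i) : GHom (q0 t p₀) (q0 t p₀)))
        = fun i => (y i : GHom (q0 t p₀) (q0 t p₀)) ≫ (x i : GHom (q0 t p₀) (q0 t p₀)) := rfl
    show PhiMap t p₀ (rhoQ t h1 p₀) (fun i => ((x * y) i : GHom (q0 t p₀) (q0 t p₀))) = _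
    rw [h3, PhiMap_comp]
    rfl
  have hid : ∀ g : FundamentalGroup (Topology.WithUpperSet P) (q0 t p₀),
      Tfun t h1 p₀ (fun _ => g) = g := by
    intro g
    show PhiMap t p₀ (rhoQ t h1 p₀) (fun _ => (g : GHom (q0 t p₀) (q0 t p₀))) = g
    exact PhiMap_idem t h1 p₀ g
  have htay : ∀ i : Fin n, ∃ α β : Fin n → Fin 2, α i ≠ β i ∧
      ∀ x : Fin 2 → FundamentalGroup (Topology.WithUpperSet P) (q0 t p₀),
        Tfun t h1 p₀ (fun j => x (α j)) = Tfun t h1 p₀ (fun j => x (β j)) := by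
    intro i
    obtain ⟨s, α, β, hne, hin⟩ := h2 i
    refine ⟨α, β, hne, fun x => ?_⟩
    show PhiMap t p₀ (rhoQ t h1 p₀) (fun j => (x (α j) : GHom (q0 t p₀) (q0 t p₀)))
        = PhiMap t p₀ (rhoQ t h1 p₀) (fun j => (x (β j) : GHom (q0 t p₀) (q0 t p₀)))
    exact PhiMap_taylor t p₀ (rhoQ t h1 p₀) s α β hin (fun k => (x k : GHom (q0 t p₀) (q0 t p₀)))
  have hq : ∀ a b : FundamentalGroup (Topology.WithUpperSet P) (q0 t p₀), a * b = b * a :=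
    comm_of_taylor (Tfun t h1 p₀) hmul hid htay
  intro a b
  have e := FundamentalGroup.fundamentalGroupMulEquivOfPath
    (X := Topology.WithUpperSet P) (x₀ := p₀) (x₁ := q0 t p₀)
    ((idemHomotopy t h1).evalAt p₀ : Path p₀ (q0 t p₀))
  apply e.injective
  rw [map_mul, map_mul, hq]

end Assembly2

end SubTaylorProof


theorem subTaylor_fundamental_group_abelian {P : Type*} [PartialOrder P] [Fintype P]
    {n : ℕ} (hn : 1 ≤ n) (hst : HasSubTaylor P n) (p₀ : Topology.WithUpperSet P) :
    ∀ a b : FundamentalGroup (Topology.WithUpperSet P) p₀, a * b = b * a := by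
  obtain ⟨t, h1, h2⟩ := hst
  exact SubTaylorProof.comm_aux t h1 h2 p₀
end
end

section
/- Let P be a finite poset admitting a sub-Taylor polymorphism, and let r : P → P be a monotone map with r ∘ r = r. Then the subposet Set.range r, with the induced order, admits a sub-Taylor polymorphism (of the same arity). -/
theorem retract_hasSubTaylor {P : Type*} [PartialOrder P] [Fintype P]
    {n : ℕ} (hn : 1 ≤ n) (hst : HasSubTaylor P n)
    (r : P → P) (hr : Monotone r) (hidem : ∀ x, r (r x) = r x) :
    HasSubTaylor (Set.range r) n := by
  obtain ⟨t, ht1, ht2⟩ := hst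
  have hfix : ∀ x : Set.range r, r (x : P) = (x : P) := by
    rintro ⟨x, y, rfl⟩
    exact hidem y
  refine ⟨⟨fun x => ⟨r (t (fun i => (x i : P))), Set.mem_range_self _⟩, ?_⟩, ?_, ?_⟩
  · intro a b hab
    exact hr (t.monotone fun i => hab i)
  · intro x
    show (x : P) ≤ r (t fun _ => (x : P))
    calc (x : P) = r (x : P) := (hfix x).symm
    _ ≤ r (t fun _ => (x : P)) := hr (ht1 _)
  · intro i
    obtain ⟨s, α, β, hαβ, hs⟩ := ht2 i
    refine ⟨⟨fun p => ⟨r (s ((p.1 : P), (p.2 : P))), Set.mem_range_self _⟩, ?_⟩,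
      α, β, hαβ, ?_⟩
    · intro a b hab
      exact hr (s.monotone ⟨hab.1, hab.2⟩)
    · intro x
      obtain ⟨h1, h2⟩ := hs fun j => (x j : P)
      exact ⟨hr h1, hr h2⟩
end

section
/- Let P be a finite, connected, ramified poset and f : (Fin (n+1) → P) → P a monotone idempotent map (f (fun _ => x) = x for all x), where Fin (n+1) → P carries the pointwise order. Fix a : Fin n → P and define the slice e : P → P by e x = f (Fin.snoc a x). Then either e is not surjective, or f is the projection onto the last coordinate, i.e., f (Fin.snoc y x) = x for all y : Fin n → P and all x ∈ P. -/
section Aux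

variable {P : Type*} [PartialOrder P] [Fintype P]

/-- In a finite ramified poset, a monotone map below the identity is the identity. -/
lemma ramified_le_id_s13 (hram : IsRamified P) {k : P → P} (hk : Monotone k)
    (hle : ∀ x, k x ≤ x) : ∀ x, k x = x := by
  intro x
  induction x using WellFoundedLT.induction with
  | ind x IH =>
    by_contra hne
    have hlt : k x < x := (hle x).lt_of_ne hne
    obtain ⟨z, hkz, hz⟩ := exists_le_covBy_of_lt hlt
    have hnu : ¬ ∃! w : P, w ⋖ x := fun h => hram x (Or.inr h)
    have hz' : ∃ z' : P, z' ⋖ x ∧ z' ≠ z := by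
      by_contra hcon
      push_neg at hcon
      exact hnu ⟨z, hz, fun w hw => hcon w hw⟩
    obtain ⟨z', hz'cov, hz'ne⟩ := hz'
    have hfix : k z' = z' := IH z' hz'cov.lt
    have h1 : z' ≤ z := by
      calc z' = k z' := hfix.symm
        _ ≤ k x := hk hz'cov.lt.le
        _ ≤ z := hkz
    rcases h1.lt_or_eq with h2 | h2
    · exact hz'cov.2 h2 hz.lt
    · exact hz'ne h2

/-- In a finite ramified poset, a monotone map above the identity is the identity. -/
lemma ramified_ge_id_s13 (hram : IsRamified P) {k : P → P} (hk : Monotone k)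
    (hle : ∀ x, x ≤ k x) : ∀ x, k x = x := by
  intro x
  induction x using WellFoundedGT.induction with
  | ind x IH =>
    by_contra hne
    have hlt : x < k x := (hle x).lt_of_ne (fun h => hne h.symm)
    obtain ⟨z, hz, hkz⟩ := exists_covBy_le_of_lt hlt
    have hnu : ¬ ∃! w : P, x ⋖ w := fun h => hram x (Or.inl h)
    have hz' : ∃ z' : P, x ⋖ z' ∧ z' ≠ z := by
      by_contra hcon
      push_neg at hcon
      exact hnu ⟨z, hz, fun w hw => hcon w hw⟩
    obtain ⟨z', hz'cov, hz'ne⟩ := hz'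
    have hfix : k z' = z' := IH z' hz'cov.lt
    have h1 : z ≤ z' := by
      calc z ≤ k x := hkz
        _ ≤ k z' := hk hz'cov.lt.le
        _ = z' := hfix
    rcases h1.lt_or_eq with h2 | h2
    · exact hz'cov.2 hz.lt h2
    · exact hz'ne h2.symm

/-- A monotone surjection of a finite poset reflects the order. -/
lemma reflects_of_monotone_surjective {e : P → P} (hm : Monotone e)
    (hs : Function.Surjective e) : ∀ x y : P, e x ≤ e y → x ≤ y := by
  have hinj : Function.Injective e := Finite.injective_iff_surjective.mpr hs
  let S := {p : P × P // p.1 ≤ p.2}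
  let φ : S → S := fun p => ⟨(e p.1.1, e p.1.2), hm p.2⟩
  have hφinj : Function.Injective φ := by
    rintro ⟨⟨x1, x2⟩, h⟩ ⟨⟨y1, y2⟩, h'⟩ hxy
    have h2 := Subtype.ext_iff.mp hxy
    rw [Prod.mk.injEq] at h2
    exact Subtype.ext (Prod.ext (hinj h2.1) (hinj h2.2))
  have hφs : Function.Surjective φ := Finite.injective_iff_surjective.mp hφinj
  intro x y hxy
  obtain ⟨⟨⟨u, v⟩, huv⟩, hfe⟩ := hφs ⟨(e x, e y), hxy⟩
  have h2 := Subtype.ext_iff.mp hfe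
  rw [Prod.mk.injEq] at h2
  have hu : u = x := hinj h2.1
  have hv : v = y := hinj h2.2
  rw [← hu, ← hv]
  exact huv

/-- Connectedness lifts along an update of one coordinate. -/
lemma posetConnected_update {n : ℕ} (y : Fin n → P) (i : Fin n) (b : P)
    (h : PosetConnected (y i) b) : PosetConnected y (Function.update y i b) := by
  unfold PosetConnected at h ⊢
  induction h with
  | refl => rw [Function.update_eq_self]
  | @tail c d _ hstep IH =>
    refine IH.tail ?_
    have key : ∀ u v : P, u ≤ v →
        (Function.update y i u : Fin n → P) ≤ Function.update y i v := by
      intro u v huv j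
      rcases eq_or_ne j i with rfl | hne
      · simpa using huv
      · simp [Function.update_of_ne hne]
    rcases hstep with h1 | h1
    · exact Or.inl (key _ _ h1)
    · exact Or.inr (key _ _ h1)

/-- The pointwise order on tuples over a connected poset is connected. -/
lemma posetConnected_pi (hconn : ∀ a b : P, PosetConnected a b) {n : ℕ}
    (y y' : Fin n → P) : PosetConnected y y' := by
  have key : ∀ s : Finset (Fin n),
      PosetConnected y (fun i => if i ∈ s then y' i else y i) := by
    intro s
    induction s using Finset.induction with
    | empty =>
      have : (fun i => if i ∈ (∅ : Finset (Fin n)) then y' i else y i) = y := by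
        funext i; simp
      rw [this]
      exact Relation.ReflTransGen.refl
    | @insert j s hjs IH =>
      have heq : (fun i => if i ∈ insert j s then y' i else y i)
          = Function.update (fun i => if i ∈ s then y' i else y i) j (y' j) := by
        funext i
        rcases eq_or_ne i j with rfl | hne
        · simp
        · simp [Function.update_of_ne hne, Finset.mem_insert, hne]
      rw [heq]
      refine Relation.ReflTransGen.trans IH ?_
      have := posetConnected_update (P := P) (fun i => if i ∈ s then y' i else y i) j (y' j)
        (by simpa [hjs] using hconn (y j) (y' j))
      exact this
  have h := key Finset.univ
  have : (fun i => if i ∈ (Finset.univ : Finset (Fin n)) then y' i else y i) = y' := by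
    funext i; simp
  rwa [this] at h

end Aux

theorem slice_not_onto_or_projection {P : Type*} [PartialOrder P] [Fintype P]
    (hconn : ∀ a b : P, PosetConnected a b) (hram : IsRamified P)
    {n : ℕ} (f : (Fin (n + 1) → P) → P) (hmono : Monotone f)
    (hidem : ∀ x : P, f (fun _ => x) = x) (a : Fin n → P) :
    ¬ Function.Surjective (fun x : P => f (Fin.snoc a x)) ∨
      ∀ (y : Fin n → P) (x : P), f (Fin.snoc y x) = x := by
  by_cases hs : Function.Surjective (fun x : P => f (Fin.snoc a x))
  · right
    set e : P → P := fun x => f (Fin.snoc a x) with he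
    have hsnoc : ∀ (y y' : Fin n → P) (x x' : P), y ≤ y' → x ≤ x' →
        (Fin.snoc y x : Fin (n + 1) → P) ≤ Fin.snoc y' x' := by
      intro y y' x x' hy hx i
      refine Fin.lastCases ?_ ?_ i
      · simpa using hx
      · intro j; simpa using hy j
    have hemono : Monotone e := fun u v huv =>
      hmono (hsnoc a a u v le_rfl huv)
    have hrefl := reflects_of_monotone_surjective hemono hs
    have hinj : Function.Injective e := Finite.injective_iff_surjective.mpr hs
    let E : P ≃ P := Equiv.ofBijective e ⟨hinj, hs⟩
    have hEg : ∀ x, e (E.symm x) = x := fun x => E.apply_symm_apply x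
    have hgE : ∀ x, E.symm (e x) = x := fun x => E.symm_apply_apply x
    have hgmono : Monotone (E.symm : P → P) := by
      intro u v huv
      apply hrefl
      rw [hEg, hEg]; exact huv
    -- propagation along a comparability step of tuples
    have step : ∀ y y' : Fin n → P, (y ≤ y' ∨ y' ≤ y) →
        (∀ x, f (Fin.snoc y x) = e x) → ∀ x, f (Fin.snoc y' x) = e x := by
      intro y y' hcase hy
      have hm' : Monotone fun x => f (Fin.snoc y' x) := fun u v huv =>
        hmono (hsnoc y' y' u v le_rfl huv)
      rcases hcase with h | h
      · have hk : ∀ x, x ≤ E.symm (f (Fin.snoc y' x)) := by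
          intro x
          have h1 : e x ≤ f (Fin.snoc y' x) := by
            rw [← hy x]; exact hmono (hsnoc y y' x x h le_rfl)
          have h2 := hgmono h1
          rwa [hgE] at h2
        have hid := ramified_ge_id_s13 hram (hgmono.comp hm') hk
        intro x
        have h3 := hid x
        simp only [Function.comp_apply] at h3
        have h4 := congrArg e h3
        rwa [hEg] at h4
      · have hk : ∀ x, E.symm (f (Fin.snoc y' x)) ≤ x := by
          intro x
          have h1 : f (Fin.snoc y' x) ≤ e x := by
            rw [← hy x]; exact hmono (hsnoc y' y x x h le_rfl)
          have h2 := hgmono h1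
          rwa [hgE] at h2
        have hid := ramified_le_id_s13 hram (hgmono.comp hm') hk
        intro x
        have h3 := hid x
        simp only [Function.comp_apply] at h3
        have h4 := congrArg e h3
        rwa [hEg] at h4
    -- every slice agrees with e
    have all_eq : ∀ y : Fin n → P, ∀ x, f (Fin.snoc y x) = e x := by
      intro y
      have h := posetConnected_pi hconn a y
      unfold PosetConnected at h
      induction h with
      | refl => intro x; rfl
      | @tail b c _ hbc IH => exact step b c hbc IH
    -- e is the identity
    have hfix : ∀ x : P, e x = x := by
      intro x
      have h1 := all_eq (fun _ => x) x
      have h2 : (Fin.snoc (fun _ => x) x : Fin (n + 1) → P) = fun _ => x := by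
        funext i
        refine Fin.lastCases ?_ ?_ i <;> simp
      rw [h2, hidem] at h1
      exact h1.symm
    intro y x
    rw [all_eq y x, hfix x]
  · exact Or.inl hs
end

section
/- Let X be a nonempty topological space, n ≥ 1, and i, j : Fin n with i ≠ j. If the coordinate projections pᵢ, pⱼ : (Fin n → X) → X (where Fin n → X carries the product topology), pᵢ x = x i and pⱼ x = x j, are homotopic as continuous maps, then X is contractible. -/
theorem contractible_of_homotopic_projections {X : Type*} [TopologicalSpace X] [Nonempty X]
    {n : ℕ} (hn : 1 ≤ n) (i j : Fin n) (hij : i ≠ j)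
    (h : (⟨fun x : Fin n → X => x i, continuous_apply i⟩ : C((Fin n → X), X)).Homotopic
      ⟨fun x : Fin n → X => x j, continuous_apply j⟩) :
    ContractibleSpace X := by
  obtain ⟨c⟩ := ‹Nonempty X›
  let g : C(X, Fin n → X) :=
    ⟨fun x k => if k = i then x else c, by
      apply continuous_pi
      intro k
      by_cases hk : k = i <;> simp [hk] <;> continuity⟩
  have h2 := ContinuousMap.Homotopic.comp h (ContinuousMap.Homotopic.refl g)
  rw [contractible_iff_id_nullhomotopic]
  refine ⟨c, ?_⟩
  have e1 : (⟨fun x : Fin n → X => x i, continuous_apply i⟩ : C((Fin n → X), X)).comp g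
      = ContinuousMap.id X := by
    ext x; simp [g]
  have e2 : (⟨fun x : Fin n → X => x j, continuous_apply j⟩ : C((Fin n → X), X)).comp g
      = ContinuousMap.const X c := by
    ext x; simp [g, hij.symm]
  rwa [e1, e2] at h2
end

section
/- Let P be a nonempty finite poset, n ≥ 1, and i, j : Fin n with i ≠ j. If the coordinate projections pᵢ, pⱼ : (Fin n → P) → P (pointwise order on Fin n → P) lie in the same connected component of the poset of monotone maps (Fin n → P) → P with the pointwise order, then WithUpperSet P is contractible. -/
open Topology

/-- Two pointwise-comparable continuous maps into an upper-set (Alexandrov) space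
are homotopic. -/
lemma homotopic_of_le {X P : Type*} [TopologicalSpace X] [Preorder P]
    (f g : C(X, Topology.WithUpperSet P)) (hfg : ∀ x, f x ≤ g x) :
    f.Homotopic g := by
  refine ⟨⟨⟨fun p => if p.1 = 0 then f p.2 else g p.2, ?_⟩, ?_, ?_⟩⟩
  · rw [continuous_def]
    intro U hU
    rw [Topology.IsUpperSet.isOpen_iff_isUpperSet] at hU
    have : (fun p : unitInterval × X => if p.1 = 0 then f p.2 else g p.2) ⁻¹' U =
        (Set.univ ×ˢ (f ⁻¹' U)) ∪ ({t : unitInterval | t ≠ 0} ×ˢ (g ⁻¹' U)) := by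
      ext ⟨t, x⟩
      simp only [Set.mem_preimage, Set.mem_union, Set.mem_prod, Set.mem_univ, true_and,
        Set.mem_setOf_eq]
      by_cases ht : t = 0
      · simp only [ht, if_pos rfl]
        constructor
        · intro hfx; exact Or.inl hfx
        · rintro (hfx | ⟨hne, _⟩)
          · exact hfx
          · exact absurd rfl hne
      · simp only [if_neg ht]
        constructor
        · intro hgx; exact Or.inr ⟨ht, hgx⟩
        · rintro (hfx | ⟨_, hgx⟩)
          · exact hU (hfg x) hfx
          · exact hgx
    rw [this]
    exact ((isOpen_univ.prod (f.continuous.isOpen_preimage U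
      (by rwa [Topology.IsUpperSet.isOpen_iff_isUpperSet])))).union
      ((isOpen_compl_singleton).prod (g.continuous.isOpen_preimage U
      (by rwa [Topology.IsUpperSet.isOpen_iff_isUpperSet])))
  · intro x; simp
  · intro x
    simp only
    rw [if_neg (by norm_num : (1 : unitInterval) ≠ 0)]

theorem contractible_of_connected_projections {P : Type*} [PartialOrder P] [Fintype P]
    [Nonempty P] {n : ℕ} (hn : 1 ≤ n) (i j : Fin n) (hij : i ≠ j)
    (h : PosetConnected
      (Pi.evalOrderHom (π := fun _ : Fin n => P) i)
      (Pi.evalOrderHom (π := fun _ : Fin n => P) j)) :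
    ContractibleSpace (Topology.WithUpperSet P) := by
  obtain ⟨a⟩ := ‹Nonempty P›
  -- the embedding `e x = (x in coord i, a elsewhere)`
  have emono : Monotone (fun (x : P) (k : Fin n) => if k = i then x else a) := by
    intro x y hxy k
    dsimp only
    split <;> [exact hxy; exact le_rfl]
  set e : P →o (Fin n → P) := ⟨fun x k => if k = i then x else a, emono⟩ with he
  -- transport the chain to self-maps of P
  have key : ∀ F G : (Fin n → P) →o P,
      Relation.ReflTransGen (fun u v : ((Fin n → P) →o P) => u ≤ v ∨ v ≤ u) F G →
      (Topology.WithUpperSet.map (F.comp e)).Homotopic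
        (Topology.WithUpperSet.map (G.comp e)) := by
    intro F G hFG
    induction hFG with
    | refl => exact ContinuousMap.Homotopic.refl _
    | tail _ hstep ih =>
        refine ih.trans ?_
        rcases hstep with hle | hle
        · exact homotopic_of_le _ _ fun x => hle _
        · exact (homotopic_of_le _ _ fun x => hle _).symm
  have hid : (ContinuousMap.id (Topology.WithUpperSet P)) =
      Topology.WithUpperSet.map ((Pi.evalOrderHom (π := fun _ : Fin n => P) i).comp e) := by
    ext x
    show x = Topology.WithUpperSet.toUpperSet (if i = i then _ else a)
    rw [if_pos rfl]
    rfl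
  have hconst : Topology.WithUpperSet.map
      ((Pi.evalOrderHom (π := fun _ : Fin n => P) j).comp e) =
      ContinuousMap.const _ (Topology.WithUpperSet.toUpperSet a) := by
    ext x
    show Topology.WithUpperSet.toUpperSet (if j = i then _ else a) = _
    rw [if_neg (fun hji => hij hji.symm)]
    rfl
  rw [contractible_iff_id_nullhomotopic _]
  refine ⟨Topology.WithUpperSet.toUpperSet a, ?_⟩
  rw [hid]
  have := key _ _ h
  rwa [hconst] at this
end

section
/- Let P be a finite connected poset such that WithUpperSet P is not contractible. Suppose that for some m ≥ 2 there exists a monotone idempotent map g : (Fin m → P) → P (g (fun _ => x) = x for all x, pointwise order on Fin m → P) that is not equal to any coordinate projection. Then there exists a monotone idempotent binary map h : P × P → P (h (x, x) = x for all x, componentwise order on P × P) that is neither the first projection (x, y) ↦ x nor the second projection (x, y) ↦ y. -/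
open Topology

private lemma collapse_aux {P : Type*} [PartialOrder P]
    (hconn : ∀ a b : P, PosetConnected a b)
    (hcomp : ∀ x y : P, x ≤ y → x = y) (a b : P) : a = b := by
  induction hconn a b with
  | refl => rfl
  | tail _ hstep ih =>
      rcases hstep with h | h
      · exact ih.trans (hcomp _ _ h)
      · exact ih.trans (hcomp _ _ h).symm

/-- Two-block pattern tuple. -/
private def patFun {P : Type*} {k : ℕ} (S : Finset (Fin k)) (x y : P) : Fin k → P :=
  fun i => if i ∈ S then x else y

private lemma patFun_apply {P : Type*} {k : ℕ} (S : Finset (Fin k)) (x y : P) (i : Fin k) :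
    patFun S x y i = if i ∈ S then x else y := rfl

/-- A monotone idempotent "majority" operation contradicts binary triviality
on a nontrivial poset. -/
private lemma no_majority {P : Type*} [PartialOrder P] (a₀ b₀ : P) (hab : a₀ ≠ b₀)
    (BT : ∀ h : P × P → P, Monotone h → (∀ x, h (x, x) = x) →
      (h = fun p => p.1) ∨ (h = fun p => p.2))
    (t : P → P → P → P)
    (hmono : ∀ c, Monotone fun p : P × P => t p.1 p.2 c)
    (t1 : ∀ x y, t x x y = x) (t2 : ∀ x y, t x y x = x)
    (t3 : ∀ x y, t x y y = y) : False := by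
  by_cases hc : ∀ c x y, t x y c = x
  · exact hab ((hc b₀ a₀ b₀).symm.trans (t3 a₀ b₀))
  · push_neg at hc
    obtain ⟨c, x0, y0, hne⟩ := hc
    rcases BT (fun p => t p.1 p.2 c) (hmono c) (fun x => t1 x c) with h | h
    · exact hne (congrFun h (x0, y0))
    · have h1 := congrFun h (c, a₀)
      have h2 := congrFun h (c, b₀)
      simp only at h1 h2
      rw [t2 c a₀] at h1
      rw [t2 c b₀] at h2
      exact hab (h1.symm.trans h2)

private def insG {P : Type*} {n : ℕ} (g : (Fin (n + 1) → P) → P) (j : Fin (n + 1)) (c : P) :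
    (Fin n → P) → P := fun x => g (j.insertNth c x)

private lemma key_lemma {P : Type*} [PartialOrder P]
    (hconn : ∀ a b : P, PosetConnected a b)
    (a₀ b₀ : P) (hab : a₀ ≠ b₀)
    (BT : ∀ h : P × P → P, Monotone h → (∀ x, h (x, x) = x) →
      (h = fun p => p.1) ∨ (h = fun p => p.2)) :
    ∀ m : ℕ, 2 ≤ m → ∀ g : (Fin m → P) → P, Monotone g →
      (∀ x, g (fun _ => x) = x) → ∃ i : Fin m, g = fun x => x i := by
  classical
  have hCPC : ¬ (∀ x y : P, x ≤ y → x = y) := fun h => hab (collapse_aux hconn h a₀ b₀)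
  intro m hm
  induction m, hm using Nat.le_induction with
  | base =>
      intro g hgm hgi
      have hrw : ∀ x : Fin 2 → P, (fun i : Fin 2 => if i = 0 then x 0 else x 1) = x := by
        intro x; funext i; fin_cases i <;> simp
      have hHm : Monotone (fun p : P × P => g (fun i : Fin 2 => if i = 0 then p.1 else p.2)) := by
        intro p q hpq
        apply hgm
        intro i
        dsimp only
        split
        · exact hpq.1
        · exact hpq.2
      have hHi : ∀ x : P, (fun p : P × P => g (fun i : Fin 2 => if i = 0 then p.1 else p.2)) (x, x) = x := by
        intro x
        simp only [ite_self]
        exact hgi x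
      rcases BT _ hHm hHi with h | h
      · refine ⟨0, funext fun x => ?_⟩
        have := congrFun h (x 0, x 1)
        simp only at this
        rw [hrw x] at this
        exact this
      · refine ⟨1, funext fun x => ?_⟩
        have := congrFun h (x 0, x 1)
        simp only at this
        rw [hrw x] at this
        exact this
  | succ n hn IH =>
      intro g hgm hgi
      -- u S : the two-block minor of g with pattern S is the first projection
      set u : Finset (Fin (n + 1)) → Prop := fun S => ∀ x y : P, g (patFun S x y) = x with hu_def
      have hdi : ∀ S, u S ∨ (∀ x y : P, g (patFun S x y) = y) := by
        intro S
        have hm1 : Monotone (fun p : P × P => g (patFun S p.1 p.2)) := by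
          intro p q hpq
          apply hgm
          intro i
          simp only [patFun_apply]
          split
          · exact hpq.1
          · exact hpq.2
        have hm2 : ∀ x : P, (fun p : P × P => g (patFun S p.1 p.2)) (x, x) = x := by
          intro x
          have : patFun S x x = fun _ => x := by
            funext i; simp [patFun_apply]
          simp only [this]
          exact hgi x
        rcases BT _ hm1 hm2 with h | h
        · exact Or.inl fun x y => congrFun h (x, y)
        · exact Or.inr fun x y => congrFun h (x, y)
      have hmonoU : ∀ S T, S ⊆ T → u S → u T := by
        intro S T hST hS
        rcases hdi T with h | h
        · exact h
        · exfalso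
          apply hCPC
          intro x y hxy
          have h1 : g (patFun T x y) ≤ g (patFun S x y) := by
            apply hgm
            intro i
            simp only [patFun_apply]
            by_cases hiS : i ∈ S
            · simp [hiS, hST hiS]
            · by_cases hiT : i ∈ T
              · simp [hiS, hiT, hxy]
              · simp [hiS, hiT]
          rw [hS x y, h x y] at h1
          exact le_antisymm hxy h1
      have hnotboth : ∀ S, u S → u Sᶜ → False := by
        intro S h1 h2
        have e : patFun Sᶜ a₀ b₀ = patFun S b₀ a₀ := by
          funext i
          by_cases hi : i ∈ S <;> simp [patFun_apply, hi]
        have := h2 a₀ b₀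
        rw [e, h1 b₀ a₀] at this
        exact hab this.symm
      have hdual : ∀ S, ¬ u S → u Sᶜ := by
        intro S hnu
        have hv := (hdi S).resolve_left hnu
        intro x y
        have e : patFun Sᶜ x y = patFun S y x := by
          funext i
          by_cases hi : i ∈ S <;> simp [patFun_apply, hi]
        rw [e, hv y x]
      have huniv : u Finset.univ := by
        intro x y
        have : patFun (Finset.univ : Finset (Fin (n + 1))) x y = fun _ => x := by
          funext i; simp [patFun_apply]
        rw [this, hgi]
      by_cases hex : ∃ i0 : Fin (n + 1), u {i0}
      · -- semiprojection-type case: reduce arity via insertNth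
        obtain ⟨i0, hu0⟩ := hex
        have hall : ∀ S, i0 ∈ S → u S := fun S hS =>
          hmonoU _ _ (Finset.singleton_subset_iff.mpr hS) hu0
        -- pick j ≠ i0
        have hn1 : 1 < n + 1 := by omega
        set j : Fin (n + 1) := ⟨if i0.val = 0 then 1 else 0, by split <;> omega⟩ with hj_def
        have hj : j ≠ i0 := by
          intro h
          have hv := congrArg Fin.val h
          simp only [hj_def] at hv
          split at hv <;> omega
        obtain ⟨i0', hi0'⟩ := Fin.exists_succAbove_eq (Ne.symm hj)
        have hGmono : ∀ c : P, Monotone (insG g j c) := by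
          intro c x y hxy
          apply hgm
          intro l
          refine Fin.succAboveCases j ?_ (fun k => ?_) l
          · simp [Fin.insertNth_apply_same]
          · simpa [Fin.insertNth_apply_succAbove] using hxy k
        have hGidem : ∀ c x, insG g j c (fun _ => x) = x := by
          intro c x
          have e : j.insertNth c (fun _ => x) = patFun ({j}ᶜ : Finset (Fin (n + 1))) x c := by
            funext l
            refine Fin.succAboveCases j ?_ (fun k => ?_) l
            · simp [Fin.insertNth_apply_same, patFun_apply]
            · simp [Fin.insertNth_apply_succAbove, patFun_apply, Fin.succAbove_ne j k]
          show g (j.insertNth c (fun _ => x)) = x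
          rw [e]
          exact hall _ (by simp [Finset.mem_compl, Ne.symm hj]) x c
        have hGproj : ∀ c : P, ∃ k : Fin n, insG g j c = fun x => x k := fun c =>
          IH (insG g j c) (hGmono c) (hGidem c)
        set k : P → Fin n := fun c => (hGproj c).choose with hk_def
        have hk : ∀ c, insG g j c = fun x => x (k c) := fun c => (hGproj c).choose_spec
        have hkstep : ∀ c c' : P, c ≤ c' → k c = k c' := by
          intro c c' hcc
          by_contra hne
          have hle : ∀ p q : P, p ≤ q := by
            intro p q
            have h1 : insG g j c (fun l => if l = k c then p else q) ≤
                insG g j c' (fun l => if l = k c then p else q) := by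
              apply hgm
              intro l
              refine Fin.succAboveCases j ?_ (fun kk => ?_) l
              · simpa [Fin.insertNth_apply_same] using hcc
              · simp [Fin.insertNth_apply_succAbove]
            have e1 : insG g j c (fun l => if l = k c then p else q) = p := by
              rw [congrFun (hk c) (fun l => if l = k c then p else q)]
              simp
            have e2 : insG g j c' (fun l => if l = k c then p else q) = q := by
              rw [congrFun (hk c') (fun l => if l = k c then p else q)]
              simp [Ne.symm hne]
            rw [e1, e2] at h1
            exact h1
          exact hab (le_antisymm (hle a₀ b₀) (hle b₀ a₀))
        have hkconst : ∀ c c' : P, k c = k c' := by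
          intro c c'
          induction hconn c c' with
          | refl => rfl
          | tail _ hstep ih =>
              rcases hstep with h | h
              · exact ih.trans (hkstep _ _ h)
              · exact ih.trans (hkstep _ _ h).symm
        have hκ : k a₀ = i0' := by
          by_contra hne
          apply hab
          have hxy : ∀ x y : P, x = y := by
            intro x y
            have e1 : insG g j y (fun l : Fin n => if l = i0' then x else y) =
                (fun l : Fin n => if l = i0' then x else y) (k y) :=
              congrFun (hk y) _
            have e2 : (fun l : Fin n => if l = i0' then x else y) (k y) = y := by
              have : k y = k a₀ := hkconst y a₀
              simp only [this]
              simp [hne]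
            have e3 : insG g j y (fun l : Fin n => if l = i0' then x else y) = x := by
              have e : j.insertNth y (fun l : Fin n => if l = i0' then x else y) =
                  patFun ({i0} : Finset (Fin (n + 1))) x y := by
                funext l
                refine Fin.succAboveCases j ?_ (fun kk => ?_) l
                · simp [Fin.insertNth_apply_same, patFun_apply, hj]
                · simp only [Fin.insertNth_apply_succAbove, patFun_apply, Finset.mem_singleton]
                  by_cases hkk : kk = i0'
                  · simp [hkk, hi0']
                  · have : j.succAbove kk ≠ i0 := by
                      rw [← hi0']
                      simpa [Fin.succAbove_right_inj] using hkk
                    simp [hkk, this]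
              show g (j.insertNth y (fun l : Fin n => if l = i0' then x else y)) = x
              rw [e]
              exact hu0 x y
            exact (e3.symm.trans e1).trans e2
          exact hxy a₀ b₀
        refine ⟨i0, funext fun z => ?_⟩
        have e0 : j.insertNth (z j) (j.removeNth z) = z := Fin.insertNth_self_removeNth j z
        have e1 : g z = insG g j (z j) (j.removeNth z) := by
          show g z = g (j.insertNth (z j) (j.removeNth z))
          rw [e0]
        rw [e1, congrFun (hk (z j)) (j.removeNth z), hkconst (z j) a₀, hκ]
        show z (j.succAbove i0') = z i0
        rw [hi0']
      · -- majority case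
        exfalso
        push_neg at hex
        have hne_univ : (Finset.univ.filter u).Nonempty :=
          ⟨Finset.univ, Finset.mem_filter.mpr ⟨Finset.mem_univ _, huniv⟩⟩
        obtain ⟨M, hMmem, hMmin⟩ :=
          Finset.exists_min_image (Finset.univ.filter u) Finset.card hne_univ
        have hMu : u M := (Finset.mem_filter.mp hMmem).2
        have hMmin' : ∀ S, u S → M.card ≤ S.card := fun S hS =>
          hMmin S (Finset.mem_filter.mpr ⟨Finset.mem_univ _, hS⟩)
        have hMne : M.Nonempty := by
          rcases Finset.eq_empty_or_nonempty M with h | h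
          · exfalso
            apply hab
            have := hMu a₀ b₀
            have e : patFun M a₀ b₀ = fun _ => b₀ := by
              funext i; simp [patFun_apply, h]
            rw [e, hgi] at this
            exact this.symm
          · exact h
        obtain ⟨i, hi⟩ := hMne
        have hB : ¬ u (M.erase i) := by
          intro h
          have h1 := hMmin' _ h
          have h2 := Finset.card_erase_of_mem hi
          have h3 : 0 < M.card := Finset.card_pos.mpr ⟨i, hi⟩
          omega
        have hBc : u (M.erase i)ᶜ := hdual _ hB
        have hvi : ∀ x y : P, g (patFun ({i} : Finset (Fin (n + 1))) x y) = y :=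
          (hdi {i}).resolve_left (hex i)
        -- the majority operation
        refine no_majority a₀ b₀ hab BT
          (fun x y z => g (fun l => if l = i then x else if l ∈ M then y else z))
          ?_ ?_ ?_ ?_
        · intro c p q hpq
          apply hgm
          intro l
          dsimp only
          split
          · exact hpq.1
          · split
            · exact hpq.2
            · exact le_refl c
        · intro x y
          have e : (fun l => if l = i then x else if l ∈ M then x else y) = patFun M x y := by
            funext l
            by_cases h1 : l = i
            · subst h1; simp [patFun_apply, hi]
            · by_cases h2 : l ∈ M <;> simp [patFun_apply, h1, h2]
          show g _ = x
          rw [e]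
          exact hMu x y
        · intro x y
          have e : (fun l => if l = i then x else if l ∈ M then y else x) =
              patFun (M.erase i)ᶜ x y := by
            funext l
            by_cases h1 : l = i
            · subst h1
              simp [patFun_apply, Finset.mem_compl, Finset.mem_erase]
            · by_cases h2 : l ∈ M <;>
                simp [patFun_apply, h1, h2, Finset.mem_compl, Finset.mem_erase]
          show g _ = x
          rw [e]
          exact hBc x y
        · intro x y
          have e : (fun l => if l = i then x else if l ∈ M then y else y) =
              patFun ({i} : Finset (Fin (n + 1))) x y := by
            funext l
            by_cases h1 : l = i <;> simp [patFun_apply, h1]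
          show g _ = y
          rw [e]
          exact hvi x y

theorem binary_nonprojection_of_nonprojection {P : Type*} [PartialOrder P] [Fintype P]
    (hconn : ∀ a b : P, PosetConnected a b)
    (hnc : ¬ ContractibleSpace (Topology.WithUpperSet P))
    {m : ℕ} (hm : 2 ≤ m) (g : (Fin m → P) → P) (hgmono : Monotone g)
    (hgidem : ∀ x : P, g (fun _ => x) = x)
    (hgproj : ∀ i : Fin m, g ≠ fun x => x i) :
    ∃ h : P × P → P, Monotone h ∧ (∀ x : P, h (x, x) = x) ∧
      h ≠ (fun p => p.1) ∧ h ≠ (fun p => p.2) := by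
  classical
  by_cases htriv : ∀ x y : P, x = y
  · exact absurd (funext fun x => htriv _ _) (hgproj ⟨0, by omega⟩)
  · push_neg at htriv
    obtain ⟨a₀, b₀, hab⟩ := htriv
    by_contra hcon
    push_neg at hcon
    have BT : ∀ h : P × P → P, Monotone h → (∀ x, h (x, x) = x) →
        (h = fun p => p.1) ∨ (h = fun p => p.2) := by
      intro h hmh hih
      by_cases hp : h = fun p => p.1
      · exact Or.inl hp
      · exact Or.inr (hcon h hmh hih hp)
    obtain ⟨i, hgeq⟩ := key_lemma hconn a₀ b₀ hab BT m hm g hgmono hgidem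
    exact hgproj i hgeq
end

section
/- Let H = (V, E) be a finite graph with a Taylor polymorphism of arity n. Then for every finite graph G, the poset mhom(G, H) of multihomomorphisms from G to H admits a sub-Taylor polymorphism of arity n. -/
/-- A polymorphism of arity `n` of the graph `(V, E)`. -/
def IsPolymorphism {V : Type*} (E : V → V → Prop) {n : ℕ} (f : (Fin n → V) → V) : Prop :=
  ∀ u v : Fin n → V, (∀ i, E (u i) (v i)) → E (f u) (f v)

theorem mhom_hasSubTaylor {V : Type*} [Fintype V] (E : V → V → Prop)
    (hsymmE : ∀ u v, E u v → E v u) {n : ℕ} (hn : 1 ≤ n)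
    (t : (Fin n → V) → V) (hpoly : IsPolymorphism E t) (htaylor : IsTaylorOp t) :
    ∀ (W : Type*) [Fintype W] (F : W → W → Prop),
      (∀ u v, F u v → F v u) → HasSubTaylor (Mhom F E) n := by
  intro W _ F _
  classical
  -- the big operation
  set Tfun : (Fin n → Mhom F E) → W → Set V :=
    fun m w => {v | ∃ a : Fin n → V, (∀ i, a i ∈ (m i).1 w) ∧ t a = v} with hTfun
  have hTmh : ∀ m : Fin n → Mhom F E, IsMultihom F E (Tfun m) := by
    intro m
    constructor
    · intro w
      exact ⟨t (fun i => ((m i).2.1 w).choose),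
        ⟨_, fun i => ((m i).2.1 w).choose_spec, rfl⟩⟩
    · rintro u v a b huv ⟨x, hx, rfl⟩ ⟨y, hy, rfl⟩
      exact hpoly x y fun i => (m i).2.2 u v (x i) (y i) huv (hx i) (hy i)
  have hTmono : ∀ m m' : Fin n → Mhom F E, m ≤ m' → Tfun m ≤ Tfun m' := by
    intro m m' hmm w v hv
    obtain ⟨a, ha, rfl⟩ := hv
    exact ⟨a, fun i => hmm i w (ha i), rfl⟩
  refine ⟨⟨fun m => ⟨Tfun m, hTmh m⟩, fun m m' h => hTmono m m' h⟩, ?_, ?_⟩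
  · intro x
    intro w v hv
    exact ⟨fun _ => v, fun i => hv, htaylor.1 v⟩
  · intro i
    obtain ⟨α, β, hne, hid⟩ := htaylor.2 i
    set Sfun : Mhom F E × Mhom F E → W → Set V := fun p w =>
      {v | ∃ y : Fin 2 → V, y 0 ∈ p.1.1 w ∧ y 1 ∈ p.2.1 w ∧ t (y ∘ α) = v} with hSfun
    have hymem : ∀ (p : Mhom F E × Mhom F E) (w : W) (y : Fin 2 → V),
        y 0 ∈ p.1.1 w → y 1 ∈ p.2.1 w → ∀ k : Fin 2, y k ∈ (![p.1, p.2] k).1 w := by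
      intro p w y h0 h1 k
      fin_cases k <;> simpa
    have hSmh : ∀ p : Mhom F E × Mhom F E, IsMultihom F E (Sfun p) := by
      intro p
      constructor
      · intro w
        obtain ⟨a, ha⟩ := p.1.2.1 w
        obtain ⟨b, hb⟩ := p.2.2.1 w
        exact ⟨t (![a, b] ∘ α), ![a, b], by simpa, by simpa, rfl⟩
      · rintro u v a b huv ⟨y, hy0, hy1, rfl⟩ ⟨z, hz0, hz1, rfl⟩
        refine hpoly _ _ fun j => ?_
        exact (![p.1, p.2] (α j)).2.2 u v _ _ huv
          (hymem p u y hy0 hy1 (α j)) (hymem p v z hz0 hz1 (α j))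
    refine ⟨⟨fun p => ⟨Sfun p, hSmh p⟩, ?_⟩, α, β, hne, ?_⟩
    · rintro p q hpq w v ⟨y, hy0, hy1, rfl⟩
      exact ⟨y, hpq.1 w hy0, hpq.2 w hy1, rfl⟩
    · intro x
      have hmemx : ∀ (w : W) (y : Fin 2 → V), y 0 ∈ (x 0).1 w → y 1 ∈ (x 1).1 w →
          ∀ k : Fin 2, y k ∈ (x k).1 w := by
        intro w y h0 h1 k
        fin_cases k <;> assumption
      constructor
      · rintro w v ⟨y, hy0, hy1, rfl⟩
        exact ⟨y ∘ α, fun j => hmemx w y hy0 hy1 (α j), rfl⟩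
      · rintro w v ⟨y, hy0, hy1, rfl⟩
        exact ⟨y ∘ β, fun j => hmemx w y hy0 hy1 (β j), (hid y).symm⟩
end
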